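/- arXiv:2501.06452 — 10 statements merged into one kernel-verified Lean document; each statement's English description precedes it below -/
import Mathlib

section
/- Let G be a hypergraph in which no vertex is dominated by another vertex, and let x and u be vertices of G such that d(x) ≥ 1 and u ∈ e for every hyperedge e of G satisfying x ∉ e and e ∩ N(x) ≠ ∅. Then G has a minimum-size hitting set that contains x. -/
/-- Let `G` be a hypergraph (vertex set `W`, hyperedge set `E`) in which
no vertex is dominated by another vertex, and let `x` and `u` be vertices of `G` such
that `d(x) ≥ 1` and `u ∈ e` for every hyperedge `e` of `G` satisfying `x ∉ e` and
`e ∩ N(x) ≠ ∅`.  Then `G` has a minimum-size hitting set that contains `x`.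
(A vertex `q ≠ x` is a neighbor of `x` if some hyperedge contains both.) -/
theorem stmt_2 {V : Type*} [DecidableEq V]
    (W : Finset V) (E : Finset (Finset V))
    (hE : ∀ e ∈ E, e.Nonempty ∧ e ⊆ W)
    (hdom : ∀ u ∈ W, ∀ t ∈ W, t ≠ u → ¬ (∀ e ∈ E, u ∈ e → t ∈ e))
    (x : V) (hx : x ∈ W) (u : V) (hu : u ∈ W)
    (hdx : 1 ≤ (E.filter (fun e => x ∈ e)).card)
    (hcov : ∀ e ∈ E, x ∉ e →
      (∃ q ∈ e, q ≠ x ∧ ∃ e' ∈ E, x ∈ e' ∧ q ∈ e') → u ∈ e) :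
    ∃ S ⊆ W, (∀ e ∈ E, (S ∩ e).Nonempty) ∧ x ∈ S ∧
      ∀ S' ⊆ W, (∀ e ∈ E, (S' ∩ e).Nonempty) → S.card ≤ S'.card := by
  classical
  -- the collection of hitting sets contained in W
  set H : Finset (Finset V) := W.powerset.filter (fun S => ∀ e ∈ E, (S ∩ e).Nonempty)
    with hH
  have hWH : W ∈ H := by
    simp only [hH, Finset.mem_filter, Finset.mem_powerset]
    refine ⟨le_refl _, fun e he => ?_⟩
    obtain ⟨hne, hsub⟩ := hE e he
    obtain ⟨v, hv⟩ := hne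
    exact ⟨v, Finset.mem_inter.2 ⟨hsub hv, hv⟩⟩
  obtain ⟨T, hTH, hTmin⟩ := Finset.exists_min_image H Finset.card ⟨W, hWH⟩
  simp only [hH, Finset.mem_filter, Finset.mem_powerset] at hTH
  obtain ⟨hTW, hThit⟩ := hTH
  have hTmin' : ∀ S' ⊆ W, (∀ e ∈ E, (S' ∩ e).Nonempty) → T.card ≤ S'.card := by
    intro S' hS'W hS'hit
    refine hTmin S' ?_
    simp only [hH, Finset.mem_filter, Finset.mem_powerset]
    exact ⟨hS'W, hS'hit⟩
  by_cases hxT : x ∈ T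
  · exact ⟨T, hTW, hThit, hxT, hTmin'⟩
  -- x ∉ T : neighbors of x inside T
  set Nx : Finset V := T.filter (fun t => ∃ e' ∈ E, x ∈ e' ∧ t ∈ e') with hNx
  have hNxT : Nx ⊆ T := Finset.filter_subset _ _
  -- every edge containing x is hit by T inside Nx
  have hhitNx : ∀ e ∈ E, x ∈ e → ∃ t ∈ Nx, t ∈ e := by
    intro e he hxe
    obtain ⟨t, ht⟩ := hThit e he
    rw [Finset.mem_inter] at ht
    exact ⟨t, Finset.mem_filter.2 ⟨ht.1, e, he, hxe, ht.2⟩, ht.2⟩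
  have hNxne : Nx.Nonempty := by
    have : (E.filter (fun e => x ∈ e)).Nonempty := Finset.card_pos.1 hdx
    obtain ⟨e, he⟩ := this
    rw [Finset.mem_filter] at he
    obtain ⟨t, htNx, _⟩ := hhitNx e he.1 he.2
    exact ⟨t, htNx⟩
  have hNx2 : 2 ≤ Nx.card := by
    by_contra h
    push_neg at h
    interval_cases hc : Nx.card
    · exact Finset.card_ne_zero_of_mem hNxne.choose_spec hc
    · obtain ⟨y, hy⟩ := Finset.card_eq_one.1 hc
      have hyNx : y ∈ Nx := by rw [hy]; exact Finset.mem_singleton_self y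
      have hyT : y ∈ T := hNxT hyNx
      have hyW : y ∈ W := hTW hyT
      have hyx : y ≠ x := fun h => hxT (h ▸ hyT)
      refine hdom x hx y hyW hyx (fun e he hxe => ?_)
      obtain ⟨t, htNx, hte⟩ := hhitNx e he hxe
      rw [hy, Finset.mem_singleton] at htNx
      exact htNx ▸ hte
  refine ⟨(T \ Nx) ∪ {x, u}, ?_, ?_, ?_, ?_⟩
  · intro v hv
    rcases Finset.mem_union.1 hv with hv | hv
    · exact hTW (Finset.mem_sdiff.1 hv).1
    · rcases Finset.mem_insert.1 hv with h | h
      · exact h ▸ hx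
      · exact (Finset.mem_singleton.1 h) ▸ hu
  · intro e he
    by_cases hxe : x ∈ e
    · exact ⟨x, Finset.mem_inter.2 ⟨Finset.mem_union_right _ (by simp), hxe⟩⟩
    · obtain ⟨t, ht⟩ := hThit e he
      rw [Finset.mem_inter] at ht
      by_cases htNx : t ∈ Nx
      · have hue : u ∈ e := by
          refine hcov e he hxe ⟨t, ht.2, fun h => hxT (h ▸ ht.1), ?_⟩
          exact (Finset.mem_filter.1 htNx).2
        exact ⟨u, Finset.mem_inter.2 ⟨Finset.mem_union_right _ (by simp), hue⟩⟩
      · exact ⟨t, Finset.mem_inter.2 ⟨Finset.mem_union_left _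
          (Finset.mem_sdiff.2 ⟨ht.1, htNx⟩), ht.2⟩⟩
  · exact Finset.mem_union_right _ (by simp)
  · intro S' hS'W hS'hit
    have h1 : ((T \ Nx) ∪ {x, u}).card ≤ (T \ Nx).card + 2 := by
      calc ((T \ Nx) ∪ {x, u}).card ≤ (T \ Nx).card + ({x, u} : Finset V).card :=
            Finset.card_union_le _ _
        _ ≤ (T \ Nx).card + 2 := by
            have : ({x, u} : Finset V).card ≤ 2 := Finset.card_insert_le _ _ |>.trans (by simp)
            omega
    have h2 : (T \ Nx).card = T.card - Nx.card := Finset.card_sdiff_of_subset hNxT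
    have h3 : Nx.card ≤ T.card := Finset.card_le_card hNxT
    have h4 : ((T \ Nx) ∪ {x, u}).card ≤ T.card := by omega
    exact h4.trans (hTmin' S' hS'W hS'hit)
end

section
/- Let G be a hypergraph and let x be a vertex with d(x) ≥ 1 that is not dominated by any other vertex. Then every hitting set S of G with x ∉ S satisfies |S ∩ N(x)| ≥ 2. -/
/-- Let `G` be a hypergraph (vertex set `W`, hyperedge set `E`) and let
`x` be a vertex with `d(x) ≥ 1` that is not dominated by any other vertex.  Then
every hitting set `S` of `G` with `x ∉ S` satisfies `|S ∩ N(x)| ≥ 2`, where `N(x)`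
is the set of vertices `t ≠ x` sharing a hyperedge with `x`. -/
theorem stmt_3 {V : Type*} [DecidableEq V]
    (W : Finset V) (E : Finset (Finset V))
    (hE : ∀ e ∈ E, e.Nonempty ∧ e ⊆ W)
    (x : V) (hx : x ∈ W)
    (hdx : 1 ≤ (E.filter (fun e => x ∈ e)).card)
    (hnd : ∀ t ∈ W, t ≠ x → ¬ (∀ e ∈ E, x ∈ e → t ∈ e))
    (S : Finset V) (hS : S ⊆ W)
    (hhit : ∀ e ∈ E, (S ∩ e).Nonempty) (hxS : x ∉ S) :
    2 ≤ (S ∩ W.filter (fun t => t ≠ x ∧ ∃ e ∈ E, x ∈ e ∧ t ∈ e)).card := by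
  obtain ⟨e0, he0⟩ := Finset.card_pos.mp (lt_of_lt_of_le zero_lt_one hdx)
  rw [Finset.mem_filter] at he0
  obtain ⟨he0E, hxe0⟩ := he0
  obtain ⟨y, hy⟩ := hhit e0 he0E
  rw [Finset.mem_inter] at hy
  have hyx : y ≠ x := fun h => hxS (h ▸ hy.1)
  obtain ⟨e1, he1E, hxe1, hye1⟩ := by
    have := hnd y ((hE e0 he0E).2 hy.2) hyx
    push_neg at this
    exact this
  obtain ⟨z, hz⟩ := hhit e1 he1E
  rw [Finset.mem_inter] at hz
  have hzx : z ≠ x := fun h => hxS (h ▸ hz.1)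
  have hzy : z ≠ y := fun h => hye1 (h ▸ hz.2)
  have hyN : y ∈ S ∩ W.filter (fun t => t ≠ x ∧ ∃ e ∈ E, x ∈ e ∧ t ∈ e) := by
    simp only [Finset.mem_inter, Finset.mem_filter]
    exact ⟨hy.1, hS hy.1, hyx, e0, he0E, hxe0, hy.2⟩
  have hzN : z ∈ S ∩ W.filter (fun t => t ≠ x ∧ ∃ e ∈ E, x ∈ e ∧ t ∈ e) := by
    simp only [Finset.mem_inter, Finset.mem_filter]
    exact ⟨hz.1, hS hz.1, hzx, e1, he1E, hxe1, hz.2⟩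
  calc 2 = ({z, y} : Finset V).card := by rw [Finset.card_insert_of_notMem (by simp [hzy]), Finset.card_singleton]
    _ ≤ _ := Finset.card_le_card (by intro a ha; rcases Finset.mem_insert.mp ha with h | h
                                     · exact h ▸ hzN
                                     · exact (Finset.mem_singleton.mp h) ▸ hyN)
end

section
/- Let G be a hypergraph containing four pairwise distinct vertices v1, v2, v3, v4 such that {v1,v2}, {v2,v3}, {v3,v4}, and {v1,v4} are hyperedges of G. Then G has a minimum-size hitting set S such that {v1,v3} ⊆ S or {v2,v4} ⊆ S. -/
/-- Let `G` be a hypergraph (vertex set `W`, hyperedge set `E`)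
containing four pairwise distinct vertices `v1, v2, v3, v4` such that `{v1,v2}`,
`{v2,v3}`, `{v3,v4}`, and `{v1,v4}` are hyperedges of `G`.  Then `G` has a
minimum-size hitting set `S` such that `{v1,v3} ⊆ S` or `{v2,v4} ⊆ S`. -/
theorem stmt_4 {V : Type*} [DecidableEq V]
    (W : Finset V) (E : Finset (Finset V))
    (hE : ∀ e ∈ E, e.Nonempty ∧ e ⊆ W)
    (v1 v2 v3 v4 : V)
    (h12 : v1 ≠ v2) (h13 : v1 ≠ v3) (h14 : v1 ≠ v4)
    (h23 : v2 ≠ v3) (h24 : v2 ≠ v4) (h34 : v3 ≠ v4)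
    (he12 : ({v1, v2} : Finset V) ∈ E) (he23 : ({v2, v3} : Finset V) ∈ E)
    (he34 : ({v3, v4} : Finset V) ∈ E) (he14 : ({v1, v4} : Finset V) ∈ E) :
    ∃ S ⊆ W, (∀ e ∈ E, (S ∩ e).Nonempty) ∧
      (∀ S' ⊆ W, (∀ e ∈ E, (S' ∩ e).Nonempty) → S.card ≤ S'.card) ∧
      (({v1, v3} : Finset V) ⊆ S ∨ ({v2, v4} : Finset V) ⊆ S) := by
  classical
  set P : Finset (Finset V) :=
    W.powerset.filter (fun S => ∀ e ∈ E, (S ∩ e).Nonempty) with hP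
  have hWP : W ∈ P := by
    simp only [hP, Finset.mem_filter, Finset.mem_powerset]
    refine ⟨le_refl _, fun e he => ?_⟩
    obtain ⟨hne, hsub⟩ := hE e he
    rwa [Finset.inter_eq_right.mpr hsub]
  obtain ⟨T, hTP, hmin⟩ := P.exists_min_image Finset.card ⟨W, hWP⟩
  simp only [hP, Finset.mem_filter, Finset.mem_powerset] at hTP
  obtain ⟨hTW, hThit⟩ := hTP
  refine ⟨T, hTW, hThit, fun S' hS'W hS'hit => ?_, ?_⟩
  · exact hmin S' (by simp only [hP, Finset.mem_filter, Finset.mem_powerset]; exact ⟨hS'W, hS'hit⟩)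
  · have mem2 : ∀ a b : V, ({a, b} : Finset V) ∈ E → a ∈ T ∨ b ∈ T := by
      intro a b hab
      obtain ⟨x, hx⟩ := hThit _ hab
      simp only [Finset.mem_inter, Finset.mem_insert, Finset.mem_singleton] at hx
      rcases hx.2 with h | h <;> [left; right] <;> rw [← h] <;> exact hx.1
    have e12 := mem2 _ _ he12
    have e23 := mem2 _ _ he23
    have e34 := mem2 _ _ he34
    have e14 := mem2 _ _ he14
    have : (v1 ∈ T ∧ v3 ∈ T) ∨ (v2 ∈ T ∧ v4 ∈ T) := by tauto
    rcases this with ⟨h1, h3⟩ | ⟨h2, h4⟩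
    · left; intro x hx
      simp only [Finset.mem_insert, Finset.mem_singleton] at hx
      rcases hx with h | h <;> subst h <;> assumption
    · right; intro x hx
      simp only [Finset.mem_insert, Finset.mem_singleton] at hx
      rcases hx with h | h <;> subst h <;> assumption
end

section
/- Let G be a hypergraph in which every hyperedge has size at least 2, and let x, y be distinct vertices such that d(x) = 4, x is not dominated by y, and there are three pairwise distinct hyperedges e1, e2, e3 each containing both x and y. Then G has a minimum-size hitting set S such that not both x ∈ S and y ∈ S. -/
/-- Let `G` be a hypergraph (vertex set `W`, hyperedge set `E`) in which
every hyperedge has size at least 2, and let `x, y` be distinct vertices such that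
`d(x) = 4`, `x` is not dominated by `y`, and there are three pairwise distinct
hyperedges `e1, e2, e3` each containing both `x` and `y`.  Then `G` has a
minimum-size hitting set `S` such that not both `x ∈ S` and `y ∈ S`. -/
theorem stmt_5 {V : Type*} [DecidableEq V]
    (W : Finset V) (E : Finset (Finset V))
    (hE : ∀ e ∈ E, e ⊆ W ∧ 2 ≤ e.card)
    (x y : V) (hx : x ∈ W) (hy : y ∈ W) (hxy : x ≠ y)
    (hdx : (E.filter (fun e => x ∈ e)).card = 4)
    (hnd : ¬ (∀ e ∈ E, x ∈ e → y ∈ e))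
    (e1 e2 e3 : Finset V) (he1 : e1 ∈ E) (he2 : e2 ∈ E) (he3 : e3 ∈ E)
    (h12 : e1 ≠ e2) (h13 : e1 ≠ e3) (h23 : e2 ≠ e3)
    (hx1 : x ∈ e1) (hy1 : y ∈ e1) (hx2 : x ∈ e2) (hy2 : y ∈ e2)
    (hx3 : x ∈ e3) (hy3 : y ∈ e3) :
    ∃ S ⊆ W, (∀ e ∈ E, (S ∩ e).Nonempty) ∧
      (∀ S' ⊆ W, (∀ e ∈ E, (S' ∩ e).Nonempty) → S.card ≤ S'.card) ∧
      ¬ (x ∈ S ∧ y ∈ S) := by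
  classical
  set F : Finset (Finset V) :=
    W.powerset.filter (fun S => ∀ e ∈ E, (S ∩ e).Nonempty) with hF
  have hWF : W ∈ F := by
    simp only [hF, Finset.mem_filter, Finset.mem_powerset]
    refine ⟨le_refl _, fun e he => ?_⟩
    obtain ⟨hsub, hcard⟩ := hE e he
    obtain ⟨v, hv⟩ := Finset.card_pos.mp (lt_of_lt_of_le two_pos hcard)
    exact ⟨v, Finset.mem_inter.mpr ⟨hsub hv, hv⟩⟩
  obtain ⟨S, hSF, hSmin⟩ := F.exists_min_image Finset.card ⟨W, hWF⟩
  simp only [hF, Finset.mem_filter, Finset.mem_powerset] at hSF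
  obtain ⟨hSW, hShit⟩ := hSF
  have hmin : ∀ S' ⊆ W, (∀ e ∈ E, (S' ∩ e).Nonempty) → S.card ≤ S'.card := by
    intro S' hS'W hS'hit
    exact hSmin S' (Finset.mem_filter.mpr ⟨Finset.mem_powerset.mpr hS'W, hS'hit⟩)
  by_cases hcase : x ∈ S ∧ y ∈ S
  · -- replace x
    obtain ⟨hxS, hyS⟩ := hcase
    push_neg at hnd
    obtain ⟨e4, he4, hx4, hy4⟩ := hnd
    have h14 : e1 ≠ e4 := fun h => hy4 (h ▸ hy1)
    have h24 : e2 ≠ e4 := fun h => hy4 (h ▸ hy2)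
    have h34 : e3 ≠ e4 := fun h => hy4 (h ▸ hy3)
    -- the filter equals {e1,e2,e3,e4}
    have hsub4 : ({e1, e2, e3, e4} : Finset (Finset V)) ⊆ E.filter (fun e => x ∈ e) := by
      intro e he
      simp only [Finset.mem_insert, Finset.mem_singleton] at he
      rcases he with h | h | h | h <;> subst h <;>
        simp [Finset.mem_filter, he1, he2, he3, he4, hx1, hx2, hx3, hx4]
    have hcard4 : ({e1, e2, e3, e4} : Finset (Finset V)).card = 4 := by
      rw [Finset.card_insert_of_notMem (by simp [h12, h13, h14]),
        Finset.card_insert_of_notMem (by simp [h23, h24]),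
        Finset.card_insert_of_notMem (by simp [h34]), Finset.card_singleton]
    have heq : E.filter (fun e => x ∈ e) = {e1, e2, e3, e4} :=
      (Finset.eq_of_subset_of_card_le hsub4 (by omega)).symm
    -- pick z ∈ e4, z ≠ x
    obtain ⟨hsub4', hcard4'⟩ := hE e4 he4
    have : 0 < (e4.erase x).card := by
      rw [Finset.card_erase_of_mem hx4]; omega
    obtain ⟨z, hz⟩ := Finset.card_pos.mp this
    have hzx : z ≠ x := Finset.ne_of_mem_erase hz
    have hze4 : z ∈ e4 := Finset.mem_of_mem_erase hz
    refine ⟨insert z (S.erase x), ?_, ?_, ?_, ?_⟩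
    · intro v hv
      rcases Finset.mem_insert.mp hv with h | h
      · exact h ▸ hsub4' hze4
      · exact hSW (Finset.mem_of_mem_erase h)
    · intro e he
      obtain ⟨w, hw⟩ := hShit e he
      rw [Finset.mem_inter] at hw
      by_cases hwx : w = x
      · have : e ∈ E.filter (fun e => x ∈ e) := Finset.mem_filter.mpr ⟨he, hwx ▸ hw.2⟩
        rw [heq] at this
        simp only [Finset.mem_insert, Finset.mem_singleton] at this
        rcases this with h | h | h | h
        · exact ⟨y, Finset.mem_inter.mpr ⟨Finset.mem_insert_of_mem
            (Finset.mem_erase.mpr ⟨hxy.symm, hyS⟩), h ▸ hy1⟩⟩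
        · exact ⟨y, Finset.mem_inter.mpr ⟨Finset.mem_insert_of_mem
            (Finset.mem_erase.mpr ⟨hxy.symm, hyS⟩), h ▸ hy2⟩⟩
        · exact ⟨y, Finset.mem_inter.mpr ⟨Finset.mem_insert_of_mem
            (Finset.mem_erase.mpr ⟨hxy.symm, hyS⟩), h ▸ hy3⟩⟩
        · exact ⟨z, Finset.mem_inter.mpr ⟨Finset.mem_insert_self _ _, h ▸ hze4⟩⟩
      · exact ⟨w, Finset.mem_inter.mpr ⟨Finset.mem_insert_of_mem
          (Finset.mem_erase.mpr ⟨hwx, hw.1⟩), hw.2⟩⟩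
    · intro S' hS'W hS'hit
      have h1 : (insert z (S.erase x)).card ≤ (S.erase x).card + 1 :=
        Finset.card_insert_le _ _
      have h2 : (S.erase x).card = S.card - 1 := Finset.card_erase_of_mem hxS
      have h3 : 1 ≤ S.card := Finset.card_pos.mpr ⟨x, hxS⟩
      have h4 := hmin S' hS'W hS'hit
      omega
    · intro ⟨hxin, _⟩
      rcases Finset.mem_insert.mp hxin with h | h
      · exact hzx h.symm
      · exact (Finset.mem_erase.mp h).1 rfl
  · exact ⟨S, hSW, hShit, hmin, hcase⟩
end

section
/- Let G be a hypergraph in which every hyperedge has size exactly 3 and no two distinct vertices are contained in more than two common hyperedges. Let x be a vertex with d(x) = 2 whose two hyperedges are e1 = {x,y,z} and e2 = {x,v,w} with e1 ∩ e2 = {x} (so y,z,v,w are pairwise distinct and N(x) = {y,z,v,w}), such that I(x) = 0, d(p) = 3 for every p ∈ N(x), and |B(x)| = 4. If the bipartite graph H(x) is a disjoint union of two cycles of length 4 such that y and v lie in one cycle and z and w lie in the other, then G has a minimum-size hitting set S satisfying one of the following: (i) x ∈ S and y,z,v,w ∉ S; (ii) y,v ∈ S and x ∉ S; (iii) z,w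 ∈ S and x ∉ S. -/
set_option maxHeartbeats 1000000


/-- `G` is a hypergraph (vertex set `W`, hyperedge set `E`) in which every
hyperedge has size exactly 3 and no two distinct vertices lie in more than two common
hyperedges.  `x` has degree 2 with hyperedges `e1 = {x,y,z}` and `e2 = {x,v,w}`,
`e1 ∩ e2 = {x}` (so `y,z,v,w` pairwise distinct and `N(x) = {y,z,v,w}`), `I(x) = 0`
(`hI`), `d(p) = 3` for every `p ∈ N(x)`, and `|B(x)| = 4` where
`B(x) = {e ∖ N(x) : e ∈ E, x ∉ e, e ∩ N(x) ≠ ∅}`.  The bipartite graph `H(x)` on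
parts `N(x)` and `B(x)` joins `p` to `b` iff `{p} ∪ b ∈ E`.  If `H(x)` is a disjoint
union of two 4-cycles with `y, v` in one cycle and `z, w` in the other (`hcyc`: the
first cycle is `y,b1,v,b2` and the second is `z,b3,w,b4`, and these are all the edges
of `H(x)`), then `G` has a minimum-size hitting set `S` with either
(i) `x ∈ S` and `y,z,v,w ∉ S`, (ii) `y,v ∈ S` and `x ∉ S`, or
(iii) `z,w ∈ S` and `x ∉ S`. -/
theorem stmt_6 {V : Type*} [DecidableEq V]
    (W : Finset V) (E : Finset (Finset V))
    (hE : ∀ e ∈ E, e ⊆ W ∧ e.card = 3)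
    (hpair : ∀ a b : V, a ≠ b → (E.filter (fun e => a ∈ e ∧ b ∈ e)).card ≤ 2)
    (x y z v w : V)
    (hdx : (E.filter (fun e => x ∈ e)).card = 2)
    (he1 : ({x, y, z} : Finset V) ∈ E) (he2 : ({x, v, w} : Finset V) ∈ E)
    (hinter : ({x, y, z} : Finset V) ∩ ({x, v, w} : Finset V) = {x})
    (hxy : x ≠ y) (hxz : x ≠ z) (hxv : x ≠ v) (hxw : x ≠ w)
    (hyz : y ≠ z) (hyv : y ≠ v) (hyw : y ≠ w)
    (hzv : z ≠ v) (hzw : z ≠ w) (hvw : v ≠ w)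
    (hI : ∀ e ∈ E, x ∉ e → (e ∩ ({y, z, v, w} : Finset V)).card ≤ 1)
    (hdegN : ∀ p ∈ ({y, z, v, w} : Finset V), (E.filter (fun e => p ∈ e)).card = 3)
    (B : Finset (Finset V))
    (hBdef : B = (E.filter
        (fun e => x ∉ e ∧ (e ∩ ({y, z, v, w} : Finset V)).Nonempty)).image
        (fun e => e \ ({y, z, v, w} : Finset V)))
    (hB : B.card = 4)
    (hcyc : ∃ b1 b2 b3 b4 : Finset V,
      B = {b1, b2, b3, b4} ∧ ({b1, b2, b3, b4} : Finset (Finset V)).card = 4 ∧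
      ∀ p ∈ ({y, z, v, w} : Finset V), ∀ b ∈ B,
        (insert p b ∈ E ↔
          (((p = y ∨ p = v) ∧ (b = b1 ∨ b = b2)) ∨
           ((p = z ∨ p = w) ∧ (b = b3 ∨ b = b4))))) :
    ∃ S ⊆ W, (∀ e ∈ E, (S ∩ e).Nonempty) ∧
      (∀ S' ⊆ W, (∀ e ∈ E, (S' ∩ e).Nonempty) → S.card ≤ S'.card) ∧
      ((x ∈ S ∧ y ∉ S ∧ z ∉ S ∧ v ∉ S ∧ w ∉ S) ∨
       (y ∈ S ∧ v ∈ S ∧ x ∉ S) ∨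
       (z ∈ S ∧ w ∈ S ∧ x ∉ S)) := by
  classical
  obtain ⟨b1, b2, b3, b4, hBeq, hcard4, hiff⟩ := hcyc
  have hyN : y ∈ ({y, z, v, w} : Finset V) := by simp
  have hzN : z ∈ ({y, z, v, w} : Finset V) := by simp
  have hvN : v ∈ ({y, z, v, w} : Finset V) := by simp
  have hwN : w ∈ ({y, z, v, w} : Finset V) := by simp
  have hb1B : b1 ∈ B := by rw [hBeq]; simp
  have hb2B : b2 ∈ B := by rw [hBeq]; simp
  have hb3B : b3 ∈ B := by rw [hBeq]; simp
  have hb4B : b4 ∈ B := by rw [hBeq]; simp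
  have hyb1 : insert y b1 ∈ E := (hiff y hyN b1 hb1B).2 (by tauto)
  have hyb2 : insert y b2 ∈ E := (hiff y hyN b2 hb2B).2 (by tauto)
  have hvb1 : insert v b1 ∈ E := (hiff v hvN b1 hb1B).2 (by tauto)
  have hvb2 : insert v b2 ∈ E := (hiff v hvN b2 hb2B).2 (by tauto)
  have hzb3 : insert z b3 ∈ E := (hiff z hzN b3 hb3B).2 (by tauto)
  have hzb4 : insert z b4 ∈ E := (hiff z hzN b4 hb4B).2 (by tauto)
  have hwb3 : insert w b3 ∈ E := (hiff w hwN b3 hb3B).2 (by tauto)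
  have hwb4 : insert w b4 ∈ E := (hiff w hwN b4 hb4B).2 (by tauto)
  -- elements of members of B avoid x, y, z, v, w
  have hBavoid : ∀ b ∈ B, x ∉ b ∧ y ∉ b ∧ z ∉ b ∧ v ∉ b ∧ w ∉ b := by
    intro b hb
    rw [hBdef] at hb
    obtain ⟨e, he, rfl⟩ := Finset.mem_image.1 hb
    rw [Finset.mem_filter] at he
    refine ⟨fun hxb => he.2.1 (Finset.mem_sdiff.1 hxb).1, ?_, ?_, ?_, ?_⟩ <;>
      intro hpb <;> exact (Finset.mem_sdiff.1 hpb).2 (by simp)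
  have avoidN : ∀ b ∈ B, ∀ t ∈ b, t ≠ y ∧ t ≠ z ∧ t ≠ v ∧ t ≠ w := by
    intro b hb t ht
    obtain ⟨-, h1, h2, h3, h4⟩ := hBavoid b hb
    exact ⟨fun h => h1 (h ▸ ht), fun h => h2 (h ▸ ht), fun h => h3 (h ▸ ht),
      fun h => h4 (h ▸ ht)⟩
  -- the only edges containing x are e1 and e2
  have hxE : ∀ e ∈ E, x ∈ e → e = {x, y, z} ∨ e = {x, v, w} := by
    have hne : ({x, y, z} : Finset V) ≠ {x, v, w} := by
      intro h
      have hy : y ∈ ({x, v, w} : Finset V) := h ▸ (by simp : y ∈ ({x, y, z} : Finset V))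
      simp only [Finset.mem_insert, Finset.mem_singleton] at hy
      rcases hy with h' | h' | h'
      · exact hxy h'.symm
      · exact hyv h'
      · exact hyw h'
    have hsub : ({({x, y, z} : Finset V), {x, v, w}} : Finset (Finset V)) ⊆
        E.filter (fun e => x ∈ e) := by
      intro e he
      rcases Finset.mem_insert.1 he with rfl | he
      · exact Finset.mem_filter.2 ⟨he1, by simp⟩
      · rw [Finset.mem_singleton] at he
        subst he
        exact Finset.mem_filter.2 ⟨he2, by simp⟩
    have hcard2 : ({({x, y, z} : Finset V), {x, v, w}} : Finset (Finset V)).card = 2 := by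
      rw [Finset.card_insert_of_notMem (by simpa using hne), Finset.card_singleton]
    have heqf : ({({x, y, z} : Finset V), {x, v, w}} : Finset (Finset V)) =
        E.filter (fun e => x ∈ e) :=
      Finset.eq_of_subset_of_card_le hsub (by rw [hdx, hcard2])
    intro e he hxe
    have : e ∈ ({({x, y, z} : Finset V), {x, v, w}} : Finset (Finset V)) := by
      rw [heqf]; exact Finset.mem_filter.2 ⟨he, hxe⟩
    simpa using this
  -- classification of edges through a neighbor avoiding x
  have hclass : ∀ p ∈ ({y, z, v, w} : Finset V), ∀ e ∈ E, p ∈ e → x ∉ e →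
      (((p = y ∨ p = v) ∧ (e = insert p b1 ∨ e = insert p b2)) ∨
       ((p = z ∨ p = w) ∧ (e = insert p b3 ∨ e = insert p b4))) := by
    intro p hp e he hpe hxe
    have hcard1 := hI e he hxe
    have hsing : e ∩ ({y, z, v, w} : Finset V) = {p} := by
      apply Finset.eq_singleton_iff_unique_mem.2
      exact ⟨Finset.mem_inter.2 ⟨hpe, hp⟩,
        fun q hq => Finset.card_le_one.1 hcard1 q hq p (Finset.mem_inter.2 ⟨hpe, hp⟩)⟩
    have hbB : e \ ({y, z, v, w} : Finset V) ∈ B := by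
      rw [hBdef]
      exact Finset.mem_image.2 ⟨e, Finset.mem_filter.2
        ⟨he, hxe, ⟨p, Finset.mem_inter.2 ⟨hpe, hp⟩⟩⟩, rfl⟩
    have heq : e = insert p (e \ ({y, z, v, w} : Finset V)) := by
      ext a
      simp only [Finset.mem_insert, Finset.mem_sdiff]
      constructor
      · intro ha
        by_cases haN : a ∈ ({y, z, v, w} : Finset V)
        · left
          have h' : a ∈ e ∩ ({y, z, v, w} : Finset V) := Finset.mem_inter.2 ⟨ha, haN⟩
          rw [hsing] at h'
          exact Finset.mem_singleton.1 h'
        · exact Or.inr ⟨ha, by simpa using haN⟩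
      · rintro (rfl | ⟨ha, -⟩)
        exacts [hpe, ha]
    have hmem : insert p (e \ ({y, z, v, w} : Finset V)) ∈ E := heq ▸ he
    rcases (hiff p hp _ hbB).1 hmem with ⟨h1, h2⟩ | ⟨h1, h2⟩
    · exact Or.inl ⟨h1, h2.imp (fun hb => by rw [heq, hb]) (fun hb => by rw [heq, hb])⟩
    · exact Or.inr ⟨h1, h2.imp (fun hb => by rw [heq, hb]) (fun hb => by rw [heq, hb])⟩
  -- a minimum hitting set exists
  have hWmem : W ∈ W.powerset.filter (fun T => ∀ e ∈ E, (T ∩ e).Nonempty) := by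
    refine Finset.mem_filter.2 ⟨Finset.mem_powerset.2 le_rfl, fun e he => ?_⟩
    obtain ⟨a, ha⟩ := Finset.card_pos.1 (by rw [(hE e he).2]; norm_num)
    exact ⟨a, Finset.mem_inter.2 ⟨(hE e he).1 ha, ha⟩⟩
  obtain ⟨S, hS, hSmin⟩ := Finset.exists_min_image
    (W.powerset.filter (fun T => ∀ e ∈ E, (T ∩ e).Nonempty)) Finset.card ⟨W, hWmem⟩
  rw [Finset.mem_filter, Finset.mem_powerset] at hS
  obtain ⟨hSW, hhit⟩ := hS
  have hmin : ∀ T ⊆ W, (∀ e ∈ E, (T ∩ e).Nonempty) → S.card ≤ T.card := fun T hTW hT =>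
    hSmin T (Finset.mem_filter.2 ⟨Finset.mem_powerset.2 hTW, hT⟩)
  have xW : x ∈ W := (hE _ he1).1 (by simp)
  -- if insert p b ∈ E and p ∉ S then S meets b
  have hitb : ∀ (p : V) (b : Finset V), insert p b ∈ E → p ∉ S → (S ∩ b).Nonempty := by
    intro p b he hp
    obtain ⟨s, hs⟩ := hhit _ he
    rw [Finset.mem_inter, Finset.mem_insert] at hs
    rcases hs.2 with rfl | hsb
    · exact absurd hs.1 hp
    · exact ⟨s, Finset.mem_inter.2 ⟨hs.1, hsb⟩⟩
  have eraseHit : ∀ q : V, (∀ e ∈ E, q ∈ e → ((S.erase q) ∩ e).Nonempty) →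
      ∀ e ∈ E, ((S.erase q) ∩ e).Nonempty := by
    intro q h e he
    by_cases hq : q ∈ e
    · exact h e he hq
    · obtain ⟨s, hs⟩ := hhit e he
      rw [Finset.mem_inter] at hs
      exact ⟨s, Finset.mem_inter.2
        ⟨Finset.mem_erase.2 ⟨fun h' => hq (h' ▸ hs.2), hs.1⟩, hs.2⟩⟩
  have noErase : ∀ q ∈ S, ¬ (∀ e ∈ E, ((S.erase q) ∩ e).Nonempty) := by
    intro q hq h
    exact absurd (hmin _ ((Finset.erase_subset _ _).trans hSW) h)
      (not_le.2 (Finset.card_erase_lt_of_mem hq))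
  by_cases hxS : x ∈ S
  · -- show no neighbor is in S; conclude form (i)
    have side : (y ∈ S ∨ z ∈ S) → (v ∈ S ∨ w ∈ S) → False := by
      intro hY hV
      refine noErase x hxS (eraseHit x ?_)
      intro e he hxe
      rcases hxE e he hxe with rfl | rfl
      · rcases hY with hY | hY
        · exact ⟨y, Finset.mem_inter.2 ⟨Finset.mem_erase.2 ⟨Ne.symm hxy, hY⟩, by simp⟩⟩
        · exact ⟨z, Finset.mem_inter.2 ⟨Finset.mem_erase.2 ⟨Ne.symm hxz, hY⟩, by simp⟩⟩
      · rcases hV with hV | hV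
        · exact ⟨v, Finset.mem_inter.2 ⟨Finset.mem_erase.2 ⟨Ne.symm hxv, hV⟩, by simp⟩⟩
        · exact ⟨w, Finset.mem_inter.2 ⟨Finset.mem_erase.2 ⟨Ne.symm hxw, hV⟩, by simp⟩⟩
    have hynS : y ∉ S := by
      intro hy
      have hv : v ∉ S := fun hv => side (Or.inl hy) (Or.inl hv)
      obtain ⟨t1, ht1⟩ := hitb v b1 hvb1 hv
      obtain ⟨t2, ht2⟩ := hitb v b2 hvb2 hv
      rw [Finset.mem_inter] at ht1 ht2
      refine noErase y hy (eraseHit y ?_)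
      intro e he hye
      by_cases hxe : x ∈ e
      · rcases hxE e he hxe with rfl | rfl
        · exact ⟨x, Finset.mem_inter.2 ⟨Finset.mem_erase.2 ⟨hxy, hxS⟩, by simp⟩⟩
        · simp only [Finset.mem_insert, Finset.mem_singleton] at hye
          rcases hye with h | h | h
          exacts [absurd h.symm hxy, absurd h hyv, absurd h hyw]
      · rcases hclass y hyN e he hye hxe with ⟨-, rfl | rfl⟩ | ⟨hc, -⟩
        · exact ⟨t1, Finset.mem_inter.2 ⟨Finset.mem_erase.2
            ⟨(avoidN b1 hb1B t1 ht1.2).1, ht1.1⟩, Finset.mem_insert_of_mem ht1.2⟩⟩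
        · exact ⟨t2, Finset.mem_inter.2 ⟨Finset.mem_erase.2
            ⟨(avoidN b2 hb2B t2 ht2.2).1, ht2.1⟩, Finset.mem_insert_of_mem ht2.2⟩⟩
        · rcases hc with h | h
          exacts [absurd h hyz, absurd h hyw]
    have hznS : z ∉ S := by
      intro hz
      have hw : w ∉ S := fun hw => side (Or.inr hz) (Or.inr hw)
      obtain ⟨t3, ht3⟩ := hitb w b3 hwb3 hw
      obtain ⟨t4, ht4⟩ := hitb w b4 hwb4 hw
      rw [Finset.mem_inter] at ht3 ht4
      refine noErase z hz (eraseHit z ?_)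
      intro e he hze
      by_cases hxe : x ∈ e
      · rcases hxE e he hxe with rfl | rfl
        · exact ⟨x, Finset.mem_inter.2 ⟨Finset.mem_erase.2 ⟨hxz, hxS⟩, by simp⟩⟩
        · simp only [Finset.mem_insert, Finset.mem_singleton] at hze
          rcases hze with h | h | h
          exacts [absurd h.symm hxz, absurd h hzv, absurd h hzw]
      · rcases hclass z hzN e he hze hxe with ⟨hc, -⟩ | ⟨-, rfl | rfl⟩
        · rcases hc with h | h
          exacts [absurd h.symm hyz, absurd h hzv]
        · exact ⟨t3, Finset.mem_inter.2 ⟨Finset.mem_erase.2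
            ⟨(avoidN b3 hb3B t3 ht3.2).2.1, ht3.1⟩, Finset.mem_insert_of_mem ht3.2⟩⟩
        · exact ⟨t4, Finset.mem_inter.2 ⟨Finset.mem_erase.2
            ⟨(avoidN b4 hb4B t4 ht4.2).2.1, ht4.1⟩, Finset.mem_insert_of_mem ht4.2⟩⟩
    have hvnS : v ∉ S := by
      intro hv
      obtain ⟨t1, ht1⟩ := hitb y b1 hyb1 hynS
      obtain ⟨t2, ht2⟩ := hitb y b2 hyb2 hynS
      rw [Finset.mem_inter] at ht1 ht2
      refine noErase v hv (eraseHit v ?_)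
      intro e he hve
      by_cases hxe : x ∈ e
      · rcases hxE e he hxe with rfl | rfl
        · simp only [Finset.mem_insert, Finset.mem_singleton] at hve
          rcases hve with h | h | h
          exacts [absurd h.symm hxv, absurd h.symm hyv, absurd h.symm hzv]
        · exact ⟨x, Finset.mem_inter.2 ⟨Finset.mem_erase.2 ⟨hxv, hxS⟩, by simp⟩⟩
      · rcases hclass v hvN e he hve hxe with ⟨-, rfl | rfl⟩ | ⟨hc, -⟩
        · exact ⟨t1, Finset.mem_inter.2 ⟨Finset.mem_erase.2
            ⟨(avoidN b1 hb1B t1 ht1.2).2.2.1, ht1.1⟩, Finset.mem_insert_of_mem ht1.2⟩⟩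
        · exact ⟨t2, Finset.mem_inter.2 ⟨Finset.mem_erase.2
            ⟨(avoidN b2 hb2B t2 ht2.2).2.2.1, ht2.1⟩, Finset.mem_insert_of_mem ht2.2⟩⟩
        · rcases hc with h | h
          exacts [absurd h.symm hzv, absurd h hvw]
    have hwnS : w ∉ S := by
      intro hw
      obtain ⟨t3, ht3⟩ := hitb z b3 hzb3 hznS
      obtain ⟨t4, ht4⟩ := hitb z b4 hzb4 hznS
      rw [Finset.mem_inter] at ht3 ht4
      refine noErase w hw (eraseHit w ?_)
      intro e he hwe
      by_cases hxe : x ∈ e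
      · rcases hxE e he hxe with rfl | rfl
        · simp only [Finset.mem_insert, Finset.mem_singleton] at hwe
          rcases hwe with h | h | h
          exacts [absurd h.symm hxw, absurd h.symm hyw, absurd h.symm hzw]
        · exact ⟨x, Finset.mem_inter.2 ⟨Finset.mem_erase.2 ⟨hxw, hxS⟩, by simp⟩⟩
      · rcases hclass w hwN e he hwe hxe with ⟨hc, -⟩ | ⟨-, rfl | rfl⟩
        · rcases hc with h | h
          exacts [absurd h.symm hyw, absurd h.symm hvw]
        · exact ⟨t3, Finset.mem_inter.2 ⟨Finset.mem_erase.2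
            ⟨(avoidN b3 hb3B t3 ht3.2).2.2.2, ht3.1⟩, Finset.mem_insert_of_mem ht3.2⟩⟩
        · exact ⟨t4, Finset.mem_inter.2 ⟨Finset.mem_erase.2
            ⟨(avoidN b4 hb4B t4 ht4.2).2.2.2, ht4.1⟩, Finset.mem_insert_of_mem ht4.2⟩⟩
    exact ⟨S, hSW, hhit, hmin, Or.inl ⟨hxS, hynS, hznS, hvnS, hwnS⟩⟩
  · -- x ∉ S : S hits e1 via y or z, e2 via v or w
    have hYZ : y ∈ S ∨ z ∈ S := by
      obtain ⟨s, hs⟩ := hhit _ he1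
      rw [Finset.mem_inter] at hs
      simp only [Finset.mem_insert, Finset.mem_singleton] at hs
      rcases hs.2 with rfl | rfl | rfl
      exacts [absurd hs.1 hxS, Or.inl hs.1, Or.inr hs.1]
    have hVW : v ∈ S ∨ w ∈ S := by
      obtain ⟨s, hs⟩ := hhit _ he2
      rw [Finset.mem_inter] at hs
      simp only [Finset.mem_insert, Finset.mem_singleton] at hs
      rcases hs.2 with rfl | rfl | rfl
      exacts [absurd hs.1 hxS, Or.inl hs.1, Or.inr hs.1]
    -- the mixed case is impossible
    have mixed : ∀ p1 p2 : V, p1 ∈ S → p2 ∈ S → (p1 = y ∨ p1 = v) → (p2 = z ∨ p2 = w) →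
        (S ∩ b1).Nonempty → (S ∩ b2).Nonempty → (S ∩ b3).Nonempty → (S ∩ b4).Nonempty →
        False := by
      intro p1 p2 hp1 hp2 hp1N hp2N hc1 hc2 hc3 hc4
      have hp12 : p1 ≠ p2 := by
        rcases hp1N with rfl | rfl <;> rcases hp2N with rfl | rfl
        exacts [hyz, hyw, Ne.symm hzv, hvw]
      have hp1NN : p1 ∈ ({y, z, v, w} : Finset V) := by
        rcases hp1N with rfl | rfl <;> simp
      have hp2NN : p2 ∈ ({y, z, v, w} : Finset V) := by
        rcases hp2N with rfl | rfl <;> simp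
      set T := insert x ((S.erase p1).erase p2) with hT
      have hTW : T ⊆ W := by
        intro a ha
        rcases Finset.mem_insert.1 ha with rfl | ha
        · exact xW
        · exact hSW (Finset.mem_of_mem_erase (Finset.mem_of_mem_erase ha))
      have keep : ∀ t : V, t ∈ S → t ≠ y → t ≠ z → t ≠ v → t ≠ w → t ∈ T := by
        intro t ht h1 h2 h3 h4
        refine Finset.mem_insert_of_mem (Finset.mem_erase.2 ⟨?_, Finset.mem_erase.2 ⟨?_, ht⟩⟩)
        · rcases hp2N with rfl | rfl
          exacts [h2, h4]
        · rcases hp1N with rfl | rfl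
          exacts [h1, h3]
      have hThit : ∀ e ∈ E, (T ∩ e).Nonempty := by
        intro e he
        by_cases hxe : x ∈ e
        · exact ⟨x, Finset.mem_inter.2 ⟨Finset.mem_insert_self _ _, hxe⟩⟩
        · obtain ⟨s, hs⟩ := hhit e he
          rw [Finset.mem_inter] at hs
          by_cases hs1 : s = p1
          · rcases hclass p1 hp1NN e he (hs1 ▸ hs.2) hxe with ⟨-, rfl | rfl⟩ | ⟨hc, -⟩
            · obtain ⟨t, ht⟩ := hc1
              rw [Finset.mem_inter] at ht
              obtain ⟨a1, a2, a3, a4⟩ := avoidN b1 hb1B t ht.2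
              exact ⟨t, Finset.mem_inter.2 ⟨keep t ht.1 a1 a2 a3 a4,
                Finset.mem_insert_of_mem ht.2⟩⟩
            · obtain ⟨t, ht⟩ := hc2
              rw [Finset.mem_inter] at ht
              obtain ⟨a1, a2, a3, a4⟩ := avoidN b2 hb2B t ht.2
              exact ⟨t, Finset.mem_inter.2 ⟨keep t ht.1 a1 a2 a3 a4,
                Finset.mem_insert_of_mem ht.2⟩⟩
            · rcases hp1N with rfl | rfl <;> rcases hc with h | h
              exacts [absurd h hyz, absurd h hyw, absurd h.symm hzv, absurd h hvw]
          · by_cases hs2 : s = p2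
            · rcases hclass p2 hp2NN e he (hs2 ▸ hs.2) hxe with ⟨hc, -⟩ | ⟨-, rfl | rfl⟩
              · rcases hp2N with rfl | rfl <;> rcases hc with h | h
                exacts [absurd h.symm hyz, absurd h hzv, absurd h.symm hyw, absurd h.symm hvw]
              · obtain ⟨t, ht⟩ := hc3
                rw [Finset.mem_inter] at ht
                obtain ⟨a1, a2, a3, a4⟩ := avoidN b3 hb3B t ht.2
                exact ⟨t, Finset.mem_inter.2 ⟨keep t ht.1 a1 a2 a3 a4,
                  Finset.mem_insert_of_mem ht.2⟩⟩
              · obtain ⟨t, ht⟩ := hc4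
                rw [Finset.mem_inter] at ht
                obtain ⟨a1, a2, a3, a4⟩ := avoidN b4 hb4B t ht.2
                exact ⟨t, Finset.mem_inter.2 ⟨keep t ht.1 a1 a2 a3 a4,
                  Finset.mem_insert_of_mem ht.2⟩⟩
            · exact ⟨s, Finset.mem_inter.2 ⟨Finset.mem_insert_of_mem
                (Finset.mem_erase.2 ⟨hs2, Finset.mem_erase.2 ⟨hs1, hs.1⟩⟩), hs.2⟩⟩
      have h1 : p2 ∈ S.erase p1 := Finset.mem_erase.2 ⟨hp12.symm, hp2⟩
      have c1 : (S.erase p1).card = S.card - 1 := Finset.card_erase_of_mem hp1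
      have c2 : ((S.erase p1).erase p2).card = (S.erase p1).card - 1 :=
        Finset.card_erase_of_mem h1
      have c3 : T.card ≤ ((S.erase p1).erase p2).card + 1 := Finset.card_insert_le _ _
      have c4 : 1 ≤ (S.erase p1).card := Finset.card_pos.2 ⟨p2, h1⟩
      have c5 : 1 ≤ S.card := Finset.card_pos.2 ⟨p1, hp1⟩
      have := hmin T hTW hThit
      omega
    by_cases hy : y ∈ S
    · by_cases hv : v ∈ S
      · exact ⟨S, hSW, hhit, hmin, Or.inr (Or.inl ⟨hy, hv, hxS⟩)⟩
      · have hw : w ∈ S := hVW.resolve_left hv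
        by_cases hz : z ∈ S
        · exact ⟨S, hSW, hhit, hmin, Or.inr (Or.inr ⟨hz, hw, hxS⟩)⟩
        · exact absurd (mixed y w hy hw (Or.inl rfl) (Or.inr rfl)
            (hitb v b1 hvb1 hv) (hitb v b2 hvb2 hv)
            (hitb z b3 hzb3 hz) (hitb z b4 hzb4 hz)) (fun h => h)
    · have hz : z ∈ S := hYZ.resolve_left hy
      by_cases hw : w ∈ S
      · exact ⟨S, hSW, hhit, hmin, Or.inr (Or.inr ⟨hz, hw, hxS⟩)⟩
      · have hv : v ∈ S := hVW.resolve_right hw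
        exact absurd (mixed v z hv hz (Or.inr rfl) (Or.inl rfl)
          (hitb y b1 hyb1 hy) (hitb y b2 hyb2 hy)
          (hitb w b3 hwb3 hw) (hitb w b4 hwb4 hw)) (fun h => h)
end

section
/- Let G be a hypergraph in which every hyperedge has size exactly 3 and no two distinct vertices are contained in more than two common hyperedges. Let x be a vertex with d(x) = 2 whose two hyperedges are e1 = {x,y,z} and e2 = {x,v,w} with e1 ∩ e2 = {x} (so y,z,v,w are pairwise distinct and N(x) = {y,z,v,w}), such that I(x) = 0, d(p) = 3 for every p ∈ N(x), and |B(x)| = 4. If the bipartite graph H(x) is either a single cycle of length 8, or a disjoint union of two cycles of length 4 such that y and z lie in one cycle and v and w lie in the other, then G has a minimum-size hitting set S satisfying either (i) x ∈ S and y,z,v,w ∉ S, or (ii) {y,z,v,w} ⊆ S and x ∉ S. -/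
open Finset

private noncomputable def pickV {V : Type*} (x : V) (b : Finset V) : V :=
  if h : b.Nonempty then h.choose else x

private lemma pickV_mem {V : Type*} (x : V) {b : Finset V} (h : b.Nonempty) :
    pickV x b ∈ b := by
  rw [pickV, dif_pos h]
  exact h.choose_spec

private lemma card3le {α : Type*} [DecidableEq α] (u v w : α) :
    ({u, v, w} : Finset α).card ≤ 3 :=
  le_trans (card_insert_le _ _)
    (Nat.succ_le_succ (le_trans (card_insert_le _ _) (by simp)))

private lemma four_distinct {α : Type*} [DecidableEq α] {a b c d : α}
    (h : ({a, b, c, d} : Finset α).card = 4) :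
    a ≠ b ∧ a ≠ c ∧ a ≠ d ∧ b ≠ c ∧ b ≠ d ∧ c ≠ d := by
  refine ⟨?_, ?_, ?_, ?_, ?_, ?_⟩ <;> rintro rfl
  · have hs : ({a, a, c, d} : Finset α) ⊆ {a, c, d} := by
      intro t ht; simp at ht ⊢; tauto
    have := (card_le_card hs).trans (card3le a c d); omega
  · have hs : ({a, b, a, d} : Finset α) ⊆ {a, b, d} := by
      intro t ht; simp at ht ⊢; tauto
    have := (card_le_card hs).trans (card3le a b d); omega
  · have hs : ({a, b, c, a} : Finset α) ⊆ {a, b, c} := by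
      intro t ht; simp at ht ⊢; tauto
    have := (card_le_card hs).trans (card3le a b c); omega
  · have hs : ({a, b, b, d} : Finset α) ⊆ {a, b, d} := by
      intro t ht; simp at ht ⊢; tauto
    have := (card_le_card hs).trans (card3le a b d); omega
  · have hs : ({a, b, c, b} : Finset α) ⊆ {a, b, c} := by
      intro t ht; simp at ht ⊢; tauto
    have := (card_le_card hs).trans (card3le a b c); omega
  · have hs : ({a, b, c, c} : Finset α) ⊆ {a, b, c} := by
      intro t ht; simp at ht ⊢; tauto
    have := (card_le_card hs).trans (card3le a b c); omega

private lemma countA {α : Type*} [DecidableEq α] (T A : Finset α) (U : Finset (Finset α))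
    (p1 p2 p3 p4 : α) (b1 b2 b3 b4 : Finset α)
    (hp12 : p1 ≠ p2) (hp14 : p1 ≠ p4) (hp24 : p2 ≠ p4)
    (hb14 : b1 ≠ b4)
    (hA1 : p1 ∈ A) (hA2 : p2 ∈ A) (hA4 : p4 ∈ A)
    (hUm : ∀ b ∈ U, b = b1 ∨ b = b2 ∨ b = b3 ∨ b = b4)
    (h1 : b1 ∈ U → p1 ∈ T ∧ p2 ∈ T)
    (h3 : b3 ∈ U → p3 ∈ T ∧ p4 ∈ T)
    (h4 : b4 ∈ U → p4 ∈ T ∧ p1 ∈ T)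
    (hnot : ¬(p1 ∈ T ∧ p2 ∈ T ∧ p3 ∈ T ∧ p4 ∈ T))
    (hb1 : b1 ∈ U) (hb2 : b2 ∉ U) :
    U.card + 1 ≤ (T ∩ A).card := by
  obtain ⟨hT1, hT2⟩ := h1 hb1
  by_cases hb3 : b3 ∈ U
  · exact absurd ⟨hT1, hT2, (h3 hb3).1, (h3 hb3).2⟩ hnot
  by_cases hb4 : b4 ∈ U
  · have hUsub : U ⊆ {b1, b4} := by
      intro b hb
      rcases hUm b hb with rfl | rfl | rfl | rfl
      · simp
      · exact absurd hb hb2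
      · exact absurd hb hb3
      · simp
    have hU2 : U.card ≤ 2 := le_trans (card_le_card hUsub)
      (by rw [card_insert_of_notMem (by simp [hb14]), card_singleton])
    have hsub : ({p1, p2, p4} : Finset α) ⊆ T ∩ A := by
      intro t ht
      simp only [mem_insert, mem_singleton] at ht
      rcases ht with rfl | rfl | rfl
      · exact mem_inter.mpr ⟨hT1, hA1⟩
      · exact mem_inter.mpr ⟨hT2, hA2⟩
      · exact mem_inter.mpr ⟨(h4 hb4).1, hA4⟩
    have hc : ({p1, p2, p4} : Finset α).card = 3 := by
      rw [card_insert_of_notMem (by simp [hp12, hp14]),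
        card_insert_of_notMem (by simp [hp24]), card_singleton]
    have := card_le_card hsub
    omega
  · have hUsub : U ⊆ {b1} := by
      intro b hb
      rcases hUm b hb with rfl | rfl | rfl | rfl
      · simp
      · exact absurd hb hb2
      · exact absurd hb hb3
      · exact absurd hb hb4
    have hU1 : U.card ≤ 1 := le_trans (card_le_card hUsub) (by simp)
    have hsub : ({p1, p2} : Finset α) ⊆ T ∩ A := by
      intro t ht
      simp only [mem_insert, mem_singleton] at ht
      rcases ht with rfl | rfl
      · exact mem_inter.mpr ⟨hT1, hA1⟩
      · exact mem_inter.mpr ⟨hT2, hA2⟩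
    have hc : ({p1, p2} : Finset α).card = 2 := by
      rw [card_insert_of_notMem (by simp [hp12]), card_singleton]
    have := card_le_card hsub
    omega

private lemma countCyc {α : Type*} [DecidableEq α] (T A : Finset α) (U : Finset (Finset α))
    (p1 p2 p3 p4 : α) (b1 b2 b3 b4 : Finset α)
    (d12 : p1 ≠ p2) (d13 : p1 ≠ p3) (d14 : p1 ≠ p4)
    (d23 : p2 ≠ p3) (d24 : p2 ≠ p4) (d34 : p3 ≠ p4)
    (e12 : b1 ≠ b2) (e13 : b1 ≠ b3) (e14 : b1 ≠ b4)
    (e23 : b2 ≠ b3) (e24 : b2 ≠ b4) (e34 : b3 ≠ b4)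
    (hA1 : p1 ∈ A) (hA2 : p2 ∈ A) (hA3 : p3 ∈ A) (hA4 : p4 ∈ A)
    (hUm : ∀ b ∈ U, b = b1 ∨ b = b2 ∨ b = b3 ∨ b = b4)
    (h1 : b1 ∈ U → p1 ∈ T ∧ p2 ∈ T) (h2 : b2 ∈ U → p2 ∈ T ∧ p3 ∈ T)
    (h3 : b3 ∈ U → p3 ∈ T ∧ p4 ∈ T) (h4 : b4 ∈ U → p4 ∈ T ∧ p1 ∈ T)
    (hnot : ¬(p1 ∈ T ∧ p2 ∈ T ∧ p3 ∈ T ∧ p4 ∈ T))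
    (hTA : (T ∩ A).Nonempty) :
    U.card + 1 ≤ (T ∩ A).card := by
  have hUm1 : ∀ b ∈ U, b = b2 ∨ b = b3 ∨ b = b4 ∨ b = b1 := fun b hb => by
    rcases hUm b hb with h | h | h | h
    exacts [Or.inr (Or.inr (Or.inr h)), Or.inl h, Or.inr (Or.inl h),
      Or.inr (Or.inr (Or.inl h))]
  have hUm2 : ∀ b ∈ U, b = b3 ∨ b = b4 ∨ b = b1 ∨ b = b2 := fun b hb => by
    rcases hUm b hb with h | h | h | h
    exacts [Or.inr (Or.inr (Or.inl h)), Or.inr (Or.inr (Or.inr h)), Or.inl h,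
      Or.inr (Or.inl h)]
  have hUm3 : ∀ b ∈ U, b = b4 ∨ b = b1 ∨ b = b2 ∨ b = b3 := fun b hb => by
    rcases hUm b hb with h | h | h | h
    exacts [Or.inr (Or.inl h), Or.inr (Or.inr (Or.inl h)),
      Or.inr (Or.inr (Or.inr h)), Or.inl h]
  have hnot1 : ¬(p2 ∈ T ∧ p3 ∈ T ∧ p4 ∈ T ∧ p1 ∈ T) := fun h =>
    hnot ⟨h.2.2.2, h.1, h.2.1, h.2.2.1⟩
  have hnot2 : ¬(p3 ∈ T ∧ p4 ∈ T ∧ p1 ∈ T ∧ p2 ∈ T) := fun h =>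
    hnot ⟨h.2.2.1, h.2.2.2, h.1, h.2.1⟩
  have hnot3 : ¬(p4 ∈ T ∧ p1 ∈ T ∧ p2 ∈ T ∧ p3 ∈ T) := fun h =>
    hnot ⟨h.2.1, h.2.2.1, h.2.2.2, h.1⟩
  by_cases m1 : b1 ∈ U
  · by_cases m3 : b3 ∈ U
    · exact absurd ⟨(h1 m1).1, (h1 m1).2, (h3 m3).1, (h3 m3).2⟩ hnot
    · by_cases m2 : b2 ∈ U
      · exact countA T A U p2 p3 p4 p1 b2 b3 b4 b1 d23 d12.symm d13.symm e12.symm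
          hA2 hA3 hA1 hUm1 h2 h4 h1 hnot1 m2 m3
      · exact countA T A U p1 p2 p3 p4 b1 b2 b3 b4 d12 d14 d24 e14
          hA1 hA2 hA4 hUm h1 h3 h4 hnot m1 m2
  · by_cases m2 : b2 ∈ U
    · by_cases m4 : b4 ∈ U
      · exact absurd ⟨(h4 m4).2, (h2 m2).1, (h2 m2).2, (h4 m4).1⟩ hnot
      · by_cases m3 : b3 ∈ U
        · exact countA T A U p3 p4 p1 p2 b3 b4 b1 b2 d34 d23.symm d24.symm e23.symm
            hA3 hA4 hA2 hUm2 h3 h1 h2 hnot2 m3 m4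
        · exact countA T A U p2 p3 p4 p1 b2 b3 b4 b1 d23 d12.symm d13.symm e12.symm
            hA2 hA3 hA1 hUm1 h2 h4 h1 hnot1 m2 m3
    · by_cases m3 : b3 ∈ U
      · by_cases m4 : b4 ∈ U
        · exact countA T A U p4 p1 p2 p3 b4 b1 b2 b3 d14.symm d34.symm d13 e34.symm
            hA4 hA1 hA3 hUm3 h4 h2 h3 hnot3 m4 m1
        · exact countA T A U p3 p4 p1 p2 b3 b4 b1 b2 d34 d23.symm d24.symm e23.symm
            hA3 hA4 hA2 hUm2 h3 h1 h2 hnot2 m3 m4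
      · by_cases m4 : b4 ∈ U
        · exact countA T A U p4 p1 p2 p3 b4 b1 b2 b3 d14.symm d34.symm d13 e34.symm
            hA4 hA1 hA3 hUm3 h4 h2 h3 hnot3 m4 m1
        · have hUe : U = ∅ := eq_empty_iff_forall_notMem.mpr fun b hb => by
            rcases hUm b hb with rfl | rfl | rfl | rfl
            exacts [m1 hb, m2 hb, m3 hb, m4 hb]
          rw [hUe, card_empty]
          simpa using card_pos.mpr hTA

private lemma countPair {α : Type*} [DecidableEq α] (T A : Finset α) (U : Finset (Finset α))
    (y z v w q1 q2 : α) (b1 b2 b3 b4 : Finset α)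
    (hyz : y ≠ z) (hvw : v ≠ w)
    (hyA : y ∈ A) (hzA : z ∈ A) (hvA : v ∈ A) (hwA : w ∈ A)
    (hq1A : q1 ∈ A) (hq2A : q2 ∈ A)
    (hb12 : b1 ≠ b2) (hb34 : b3 ≠ b4)
    (hUm : ∀ b ∈ U, b = b1 ∨ b = b2 ∨ b = b3 ∨ b = b4)
    (h1 : b1 ∈ U → y ∈ T ∧ z ∈ T) (h2 : b2 ∈ U → y ∈ T ∧ z ∈ T)
    (h3 : b3 ∈ U → v ∈ T ∧ w ∈ T) (h4 : b4 ∈ U → v ∈ T ∧ w ∈ T)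
    (hnot : ¬(y ∈ T ∧ z ∈ T ∧ v ∈ T ∧ w ∈ T))
    (hq1T : q1 ∈ T) (hq1v : q1 ≠ v) (hq1w : q1 ≠ w)
    (hq2T : q2 ∈ T) (hq2y : q2 ≠ y) (hq2z : q2 ≠ z) :
    U.card + 1 ≤ (T ∩ A).card := by
  by_cases L : b1 ∈ U ∨ b2 ∈ U
  · have hyzT : y ∈ T ∧ z ∈ T := by
      rcases L with h | h
      exacts [h1 h, h2 h]
    by_cases R : b3 ∈ U ∨ b4 ∈ U
    · have hvwT : v ∈ T ∧ w ∈ T := by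
        rcases R with h | h
        exacts [h3 h, h4 h]
      exact absurd ⟨hyzT.1, hyzT.2, hvwT.1, hvwT.2⟩ hnot
    · push_neg at R
      have hUsub : U ⊆ {b1, b2} := by
        intro b hb
        rcases hUm b hb with rfl | rfl | rfl | rfl
        · simp
        · simp
        · exact absurd hb R.1
        · exact absurd hb R.2
      have hU2 : U.card ≤ 2 := le_trans (card_le_card hUsub)
        (by rw [card_insert_of_notMem (by simp [hb12]), card_singleton])
      have hsub : ({y, z, q2} : Finset α) ⊆ T ∩ A := by
        intro t ht
        simp only [mem_insert, mem_singleton] at ht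
        rcases ht with rfl | rfl | rfl
        · exact mem_inter.mpr ⟨hyzT.1, hyA⟩
        · exact mem_inter.mpr ⟨hyzT.2, hzA⟩
        · exact mem_inter.mpr ⟨hq2T, hq2A⟩
      have hc : ({y, z, q2} : Finset α).card = 3 := by
        rw [card_insert_of_notMem (by simp [hyz, hq2y.symm]),
          card_insert_of_notMem (by simp [hq2z.symm]), card_singleton]
      have := card_le_card hsub
      omega
  · push_neg at L
    by_cases R : b3 ∈ U ∨ b4 ∈ U
    · have hvwT : v ∈ T ∧ w ∈ T := by
        rcases R with h | h
        exacts [h3 h, h4 h]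
      have hUsub : U ⊆ {b3, b4} := by
        intro b hb
        rcases hUm b hb with rfl | rfl | rfl | rfl
        · exact absurd hb L.1
        · exact absurd hb L.2
        · simp
        · simp
      have hU2 : U.card ≤ 2 := le_trans (card_le_card hUsub)
        (by rw [card_insert_of_notMem (by simp [hb34]), card_singleton])
      have hsub : ({v, w, q1} : Finset α) ⊆ T ∩ A := by
        intro t ht
        simp only [mem_insert, mem_singleton] at ht
        rcases ht with rfl | rfl | rfl
        · exact mem_inter.mpr ⟨hvwT.1, hvA⟩
        · exact mem_inter.mpr ⟨hvwT.2, hwA⟩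
        · exact mem_inter.mpr ⟨hq1T, hq1A⟩
      have hc : ({v, w, q1} : Finset α).card = 3 := by
        rw [card_insert_of_notMem (by simp [hvw, hq1v.symm]),
          card_insert_of_notMem (by simp [hq1w.symm]), card_singleton]
      have := card_le_card hsub
      omega
    · push_neg at R
      have hUe : U = ∅ := eq_empty_iff_forall_notMem.mpr fun b hb => by
        rcases hUm b hb with rfl | rfl | rfl | rfl
        exacts [L.1 hb, L.2 hb, R.1 hb, R.2 hb]
      rw [hUe, card_empty]
      simpa using card_pos.mpr ⟨q1, mem_inter.mpr ⟨hq1T, hq1A⟩⟩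



/-- Same setting as Statement 6 (`G` a hypergraph with all hyperedges of
size exactly 3, no two distinct vertices in more than two common hyperedges; `x` of
degree 2 with hyperedges `e1 = {x,y,z}`, `e2 = {x,v,w}`, `e1 ∩ e2 = {x}`, `I(x) = 0`,
`d(p) = 3` for all `p ∈ N(x) = {y,z,v,w}`, `|B(x)| = 4`).  If the bipartite graph
`H(x)` is either a single cycle of length 8 (first disjunct of `hcyc`: for some
ordering `p1,p2,p3,p4` of `{y,z,v,w}` and distinct `b1,b2,b3,b4` forming `B(x)`, the
edges of `H(x)` are exactly those of the cycle `p1,b1,p2,b2,p3,b3,p4,b4,p1`), or a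
disjoint union of two 4-cycles with `y, z` in one cycle and `v, w` in the other
(second disjunct), then `G` has a minimum-size hitting set `S` with either
(i) `x ∈ S` and `y,z,v,w ∉ S`, or (ii) `{y,z,v,w} ⊆ S` and `x ∉ S`. -/
theorem stmt_7 {V : Type*} [DecidableEq V]
    (W : Finset V) (E : Finset (Finset V))
    (hE : ∀ e ∈ E, e ⊆ W ∧ e.card = 3)
    (hpair : ∀ a b : V, a ≠ b → (E.filter (fun e => a ∈ e ∧ b ∈ e)).card ≤ 2)
    (x y z v w : V)
    (hdx : (E.filter (fun e => x ∈ e)).card = 2)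
    (he1 : ({x, y, z} : Finset V) ∈ E) (he2 : ({x, v, w} : Finset V) ∈ E)
    (hinter : ({x, y, z} : Finset V) ∩ ({x, v, w} : Finset V) = {x})
    (hxy : x ≠ y) (hxz : x ≠ z) (hxv : x ≠ v) (hxw : x ≠ w)
    (hyz : y ≠ z) (hyv : y ≠ v) (hyw : y ≠ w)
    (hzv : z ≠ v) (hzw : z ≠ w) (hvw : v ≠ w)
    (hI : ∀ e ∈ E, x ∉ e → (e ∩ ({y, z, v, w} : Finset V)).card ≤ 1)
    (hdegN : ∀ p ∈ ({y, z, v, w} : Finset V), (E.filter (fun e => p ∈ e)).card = 3)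
    (B : Finset (Finset V))
    (hBdef : B = (E.filter
        (fun e => x ∉ e ∧ (e ∩ ({y, z, v, w} : Finset V)).Nonempty)).image
        (fun e => e \ ({y, z, v, w} : Finset V)))
    (hB : B.card = 4)
    (hcyc :
      (∃ p1 p2 p3 p4 : V, ∃ b1 b2 b3 b4 : Finset V,
        ({p1, p2, p3, p4} : Finset V) = {y, z, v, w} ∧
        B = {b1, b2, b3, b4} ∧ ({b1, b2, b3, b4} : Finset (Finset V)).card = 4 ∧
        ∀ p ∈ ({y, z, v, w} : Finset V), ∀ b ∈ B,
          (insert p b ∈ E ↔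
            ((p = p1 ∧ b = b1) ∨ (p = p2 ∧ b = b1) ∨ (p = p2 ∧ b = b2) ∨
             (p = p3 ∧ b = b2) ∨ (p = p3 ∧ b = b3) ∨ (p = p4 ∧ b = b3) ∨
             (p = p4 ∧ b = b4) ∨ (p = p1 ∧ b = b4)))) ∨
      (∃ b1 b2 b3 b4 : Finset V,
        B = {b1, b2, b3, b4} ∧ ({b1, b2, b3, b4} : Finset (Finset V)).card = 4 ∧
        ∀ p ∈ ({y, z, v, w} : Finset V), ∀ b ∈ B,
          (insert p b ∈ E ↔
            (((p = y ∨ p = z) ∧ (b = b1 ∨ b = b2)) ∨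
             ((p = v ∨ p = w) ∧ (b = b3 ∨ b = b4)))))) :
    ∃ S ⊆ W, (∀ e ∈ E, (S ∩ e).Nonempty) ∧
      (∀ S' ⊆ W, (∀ e ∈ E, (S' ∩ e).Nonempty) → S.card ≤ S'.card) ∧
      ((x ∈ S ∧ y ∉ S ∧ z ∉ S ∧ v ∉ S ∧ w ∉ S) ∨
       (({y, z, v, w} : Finset V) ⊆ S ∧ x ∉ S)) := by
  classical
  set N : Finset V := {y, z, v, w} with hNdef
  set A : Finset V := insert x N with hAdef
  have hyN : y ∈ N := by rw [hNdef]; simp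
  have hzN : z ∈ N := by rw [hNdef]; simp
  have hvN : v ∈ N := by rw [hNdef]; simp
  have hwN : w ∈ N := by rw [hNdef]; simp
  have hNA : N ⊆ A := by rw [hAdef]; exact subset_insert _ _
  have hxA : x ∈ A := by rw [hAdef]; exact mem_insert_self _ _
  have hxN : x ∉ N := by
    rw [hNdef]
    simp [hxy, hxz, hxv, hxw]
  have hNcard : N.card = 4 := by
    rw [hNdef, card_insert_of_notMem (by simp [hyz, hyv, hyw]),
      card_insert_of_notMem (by simp [hzv, hzw]),
      card_insert_of_notMem (by simp [hvw]), card_singleton]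
  have he1W : ({x, y, z} : Finset V) ⊆ W := (hE _ he1).1
  have hxW : x ∈ W := he1W (by simp)
  -- facts about B
  have hBfact : ∀ b ∈ B, b ⊆ W ∧ b.Nonempty ∧ ∀ q ∈ b, q ∉ A := by
    intro b hb
    rw [hBdef] at hb
    obtain ⟨e, he, rfl⟩ := mem_image.mp hb
    rw [mem_filter] at he
    obtain ⟨heE, hxe, hne⟩ := he
    have h3 : e.card = 3 := (hE e heE).2
    have hIc : (e ∩ N).card ≤ 1 := hI e heE hxe
    have hcs : (e \ N).card + (e ∩ N).card = e.card := card_sdiff_add_card_inter e N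
    refine ⟨fun q hq => (hE e heE).1 (mem_sdiff.mp hq).1, card_pos.mp (by omega), ?_⟩
    intro q hq
    rw [hAdef, mem_insert]
    rintro (rfl | hqN)
    · exact hxe (mem_sdiff.mp hq).1
    · exact (mem_sdiff.mp hq).2 hqN
  -- a minimum hitting set T
  obtain ⟨T, hTmem, hTmin0⟩ := exists_min_image
    (W.powerset.filter fun s => ∀ e ∈ E, (s ∩ e).Nonempty) card
    ⟨W, by
      rw [mem_filter, mem_powerset]
      refine ⟨Finset.Subset.refl _, fun e heE => ?_⟩
      have h3 := (hE e heE).2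
      obtain ⟨q, hq⟩ := card_pos.mp (show 0 < e.card by omega)
      exact ⟨q, mem_inter.mpr ⟨(hE e heE).1 hq, hq⟩⟩⟩
  rw [mem_filter, mem_powerset] at hTmem
  obtain ⟨hTW, hThit⟩ := hTmem
  have hTmin : ∀ S' ⊆ W, (∀ e ∈ E, (S' ∩ e).Nonempty) → T.card ≤ S'.card :=
    fun S' h1 h2 => hTmin0 S' (by rw [mem_filter, mem_powerset]; exact ⟨h1, h2⟩)
  obtain ⟨q1, hq1⟩ := hThit _ he1
  obtain ⟨q2, hq2⟩ := hThit _ he2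
  rw [mem_inter] at hq1 hq2
  by_cases hNT : y ∈ T ∧ z ∈ T ∧ v ∈ T ∧ w ∈ T
  · obtain ⟨hyT, hzT, hvT, hwT⟩ := hNT
    by_cases hxT : x ∈ T
    · -- drop x from T
      have hne12 : ({x, y, z} : Finset V) ≠ {x, v, w} := by
        intro h
        have hy : y ∈ ({x, v, w} : Finset V) := by rw [← h]; simp
        simp only [mem_insert, mem_singleton] at hy
        rcases hy with h' | h' | h'
        exacts [hxy h'.symm, hyv h', hyw h']
      have hfx : ({({x, y, z} : Finset V), ({x, v, w} : Finset V)} :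
          Finset (Finset V)) = E.filter fun e => x ∈ e := by
        apply eq_of_subset_of_card_le
        · intro e he
          rw [mem_insert, mem_singleton] at he
          rcases he with rfl | rfl
          · exact mem_filter.mpr ⟨he1, by simp⟩
          · exact mem_filter.mpr ⟨he2, by simp⟩
        · rw [hdx, card_insert_of_notMem (by simp [hne12]), card_singleton]
      refine ⟨T.erase x, (erase_subset _ _).trans hTW, ?_, ?_,
        Or.inr ⟨?_, notMem_erase _ _⟩⟩
      · intro e heE
        obtain ⟨q, hq⟩ := hThit e heE
        rw [mem_inter] at hq
        by_cases hqx : q = x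
        · have hxe : x ∈ e := hqx ▸ hq.2
          have hef : e ∈ E.filter fun e => x ∈ e := mem_filter.mpr ⟨heE, hxe⟩
          rw [← hfx, mem_insert, mem_singleton] at hef
          rcases hef with rfl | rfl
          · exact ⟨y, mem_inter.mpr ⟨mem_erase.mpr ⟨hxy.symm, hyT⟩, by simp⟩⟩
          · exact ⟨v, mem_inter.mpr ⟨mem_erase.mpr ⟨hxv.symm, hvT⟩, by simp⟩⟩
        · exact ⟨q, mem_inter.mpr ⟨mem_erase.mpr ⟨hqx, hq.1⟩, hq.2⟩⟩
      · exact fun S' hS'W hS'hit => le_trans (card_erase_le) (hTmin S' hS'W hS'hit)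
      · intro p hp
        rw [hNdef] at hp
        simp only [mem_insert, mem_singleton] at hp
        rcases hp with rfl | rfl | rfl | rfl
        · exact mem_erase.mpr ⟨fun h => hxy h.symm, hyT⟩
        · exact mem_erase.mpr ⟨fun h => hxz h.symm, hzT⟩
        · exact mem_erase.mpr ⟨fun h => hxv h.symm, hvT⟩
        · exact mem_erase.mpr ⟨fun h => hxw h.symm, hwT⟩
    · refine ⟨T, hTW, hThit, hTmin, Or.inr ⟨?_, hxT⟩⟩
      intro p hp
      rw [hNdef] at hp
      simp only [mem_insert, mem_singleton] at hp
      rcases hp with rfl | rfl | rfl | rfl <;> assumption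
  · -- main construction
    set U : Finset (Finset V) := B.filter (fun b => ∀ q ∈ b, q ∉ T) with hUdef
    set X : Finset V := U.image (pickV x) with hXdef
    set S : Finset V := insert x ((T \ A) ∪ X) with hSdef
    have hUB : ∀ b ∈ U, b ∈ B := fun b hb => (mem_filter.mp hb).1
    have hXmem : ∀ a ∈ X, ∃ b ∈ U, a ∈ b := by
      intro a ha
      rw [hXdef] at ha
      obtain ⟨b, hb, rfl⟩ := mem_image.mp ha
      exact ⟨b, hb, pickV_mem x (hBfact b (hUB b hb)).2.1⟩
    have hXA : ∀ a ∈ X, a ∉ A := by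
      intro a ha
      obtain ⟨b, hb, hab⟩ := hXmem a ha
      exact (hBfact b (hUB b hb)).2.2 a hab
    have hSW : S ⊆ W := by
      intro a ha
      rw [hSdef, mem_insert, mem_union] at ha
      rcases ha with rfl | ha | ha
      · exact hxW
      · exact hTW (mem_sdiff.mp ha).1
      · obtain ⟨b, hb, hab⟩ := hXmem a ha
        exact (hBfact b (hUB b hb)).1 hab
    have hK : ∀ b ∈ U, ∀ p ∈ N, insert p b ∈ E → p ∈ T := by
      intro b hb p hp hpE
      obtain ⟨q, hq⟩ := hThit _ hpE
      rw [mem_inter, mem_insert] at hq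
      rcases hq with ⟨hqT, rfl | hqb⟩
      · exact hqT
      · exact absurd hqT ((mem_filter.mp hb).2 q hqb)
    have hShit : ∀ e ∈ E, (S ∩ e).Nonempty := by
      intro e heE
      by_cases hxe : x ∈ e
      · exact ⟨x, mem_inter.mpr ⟨by rw [hSdef]; exact mem_insert_self _ _, hxe⟩⟩
      by_cases hint : (e ∩ N).Nonempty
      · have hbB : e \ N ∈ B := by
          rw [hBdef]
          exact mem_image.mpr ⟨e, mem_filter.mpr ⟨heE, hxe, hint⟩, rfl⟩
        by_cases hbT : ∀ q ∈ e \ N, q ∉ T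
        · have hbU : e \ N ∈ U := mem_filter.mpr ⟨hbB, hbT⟩
          have hpb := pickV_mem x (hBfact _ hbB).2.1
          refine ⟨pickV x (e \ N), mem_inter.mpr ⟨?_, (mem_sdiff.mp hpb).1⟩⟩
          rw [hSdef]
          exact mem_insert_of_mem (mem_union_right _ (mem_image.mpr ⟨_, hbU, rfl⟩))
        · push_neg at hbT
          obtain ⟨q, hqb, hqT⟩ := hbT
          refine ⟨q, mem_inter.mpr ⟨?_, (mem_sdiff.mp hqb).1⟩⟩
          rw [hSdef]
          refine mem_insert_of_mem (mem_union_left _ (mem_sdiff.mpr ⟨hqT, ?_⟩))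
          exact (hBfact _ hbB).2.2 q hqb
      · obtain ⟨q, hq⟩ := hThit e heE
        rw [mem_inter] at hq
        have hqA : q ∉ A := by
          rw [hAdef, mem_insert]
          rintro (rfl | hqN)
          · exact hxe hq.2
          · exact hint ⟨q, mem_inter.mpr ⟨hq.2, hqN⟩⟩
        refine ⟨q, mem_inter.mpr ⟨?_, hq.2⟩⟩
        rw [hSdef]
        exact mem_insert_of_mem (mem_union_left _ (mem_sdiff.mpr ⟨hq.1, hqA⟩))
    have hq1A : q1 ∈ A := by
      have h := hq1.2
      simp only [mem_insert, mem_singleton] at h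
      rcases h with rfl | rfl | rfl
      · exact hxA
      · exact hNA hyN
      · exact hNA hzN
    have hq2A : q2 ∈ A := by
      have h := hq2.2
      simp only [mem_insert, mem_singleton] at h
      rcases h with rfl | rfl | rfl
      · exact hxA
      · exact hNA hvN
      · exact hNA hwN
    have hTA : (T ∩ A).Nonempty := ⟨q1, mem_inter.mpr ⟨hq1.1, hq1A⟩⟩
    have hcount : U.card + 1 ≤ (T ∩ A).card := by
      rcases hcyc with ⟨p1, p2, p3, p4, b1, b2, b3, b4, hset, hBeq, hbcard, hiff⟩ |
        ⟨b1, b2, b3, b4, hBeq, hbcard, hiff⟩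
      · have hpcard : ({p1, p2, p3, p4} : Finset V).card = 4 := by
          rw [hset]; exact hNcard
        obtain ⟨d12, d13, d14, d23, d24, d34⟩ := four_distinct hpcard
        obtain ⟨e12, e13, e14, e23, e24, e34⟩ := four_distinct hbcard
        have hp1N : p1 ∈ N := by rw [← hset]; simp
        have hp2N : p2 ∈ N := by rw [← hset]; simp
        have hp3N : p3 ∈ N := by rw [← hset]; simp
        have hp4N : p4 ∈ N := by rw [← hset]; simp
        have hb1B : b1 ∈ B := by rw [hBeq]; simp
        have hb2B : b2 ∈ B := by rw [hBeq]; simp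
        have hb3B : b3 ∈ B := by rw [hBeq]; simp
        have hb4B : b4 ∈ B := by rw [hBeq]; simp
        have hUm : ∀ b ∈ U, b = b1 ∨ b = b2 ∨ b = b3 ∨ b = b4 := by
          intro b hb
          have h := hUB b hb
          rw [hBeq] at h
          simpa using h
        have h1 : b1 ∈ U → p1 ∈ T ∧ p2 ∈ T := fun hb =>
          ⟨hK b1 hb p1 hp1N ((hiff p1 hp1N b1 hb1B).mpr (Or.inl ⟨rfl, rfl⟩)),
           hK b1 hb p2 hp2N ((hiff p2 hp2N b1 hb1B).mpr (Or.inr (Or.inl ⟨rfl, rfl⟩)))⟩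
        have h2 : b2 ∈ U → p2 ∈ T ∧ p3 ∈ T := fun hb =>
          ⟨hK b2 hb p2 hp2N ((hiff p2 hp2N b2 hb2B).mpr
             (Or.inr (Or.inr (Or.inl ⟨rfl, rfl⟩)))),
           hK b2 hb p3 hp3N ((hiff p3 hp3N b2 hb2B).mpr
             (Or.inr (Or.inr (Or.inr (Or.inl ⟨rfl, rfl⟩)))))⟩
        have h3 : b3 ∈ U → p3 ∈ T ∧ p4 ∈ T := fun hb =>
          ⟨hK b3 hb p3 hp3N ((hiff p3 hp3N b3 hb3B).mpr
             (Or.inr (Or.inr (Or.inr (Or.inr (Or.inl ⟨rfl, rfl⟩)))))),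
           hK b3 hb p4 hp4N ((hiff p4 hp4N b3 hb3B).mpr
             (Or.inr (Or.inr (Or.inr (Or.inr (Or.inr (Or.inl ⟨rfl, rfl⟩)))))))⟩
        have h4 : b4 ∈ U → p4 ∈ T ∧ p1 ∈ T := fun hb =>
          ⟨hK b4 hb p4 hp4N ((hiff p4 hp4N b4 hb4B).mpr
             (Or.inr (Or.inr (Or.inr (Or.inr (Or.inr (Or.inr (Or.inl ⟨rfl, rfl⟩)))))))),
           hK b4 hb p1 hp1N ((hiff p1 hp1N b4 hb4B).mpr
             (Or.inr (Or.inr (Or.inr (Or.inr (Or.inr (Or.inr (Or.inr ⟨rfl, rfl⟩))))))))⟩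
        have hnotp : ¬(p1 ∈ T ∧ p2 ∈ T ∧ p3 ∈ T ∧ p4 ∈ T) := by
          intro h
          apply hNT
          have hall : ∀ p ∈ N, p ∈ T := by
            intro p hp
            rw [← hset] at hp
            simp only [mem_insert, mem_singleton] at hp
            rcases hp with rfl | rfl | rfl | rfl
            exacts [h.1, h.2.1, h.2.2.1, h.2.2.2]
          exact ⟨hall y hyN, hall z hzN, hall v hvN, hall w hwN⟩
        exact countCyc T A U p1 p2 p3 p4 b1 b2 b3 b4 d12 d13 d14 d23 d24 d34
          e12 e13 e14 e23 e24 e34 (hNA hp1N) (hNA hp2N) (hNA hp3N) (hNA hp4N)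
          hUm h1 h2 h3 h4 hnotp hTA
      · obtain ⟨e12, e13, e14, e23, e24, e34⟩ := four_distinct hbcard
        have hb1B : b1 ∈ B := by rw [hBeq]; simp
        have hb2B : b2 ∈ B := by rw [hBeq]; simp
        have hb3B : b3 ∈ B := by rw [hBeq]; simp
        have hb4B : b4 ∈ B := by rw [hBeq]; simp
        have hUm : ∀ b ∈ U, b = b1 ∨ b = b2 ∨ b = b3 ∨ b = b4 := by
          intro b hb
          have h := hUB b hb
          rw [hBeq] at h
          simpa using h
        have h1 : b1 ∈ U → y ∈ T ∧ z ∈ T := fun hb =>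
          ⟨hK b1 hb y hyN ((hiff y hyN b1 hb1B).mpr (Or.inl ⟨Or.inl rfl, Or.inl rfl⟩)),
           hK b1 hb z hzN ((hiff z hzN b1 hb1B).mpr (Or.inl ⟨Or.inr rfl, Or.inl rfl⟩))⟩
        have h2 : b2 ∈ U → y ∈ T ∧ z ∈ T := fun hb =>
          ⟨hK b2 hb y hyN ((hiff y hyN b2 hb2B).mpr (Or.inl ⟨Or.inl rfl, Or.inr rfl⟩)),
           hK b2 hb z hzN ((hiff z hzN b2 hb2B).mpr (Or.inl ⟨Or.inr rfl, Or.inr rfl⟩))⟩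
        have h3 : b3 ∈ U → v ∈ T ∧ w ∈ T := fun hb =>
          ⟨hK b3 hb v hvN ((hiff v hvN b3 hb3B).mpr (Or.inr ⟨Or.inl rfl, Or.inl rfl⟩)),
           hK b3 hb w hwN ((hiff w hwN b3 hb3B).mpr (Or.inr ⟨Or.inr rfl, Or.inl rfl⟩))⟩
        have h4 : b4 ∈ U → v ∈ T ∧ w ∈ T := fun hb =>
          ⟨hK b4 hb v hvN ((hiff v hvN b4 hb4B).mpr (Or.inr ⟨Or.inl rfl, Or.inr rfl⟩)),
           hK b4 hb w hwN ((hiff w hwN b4 hb4B).mpr (Or.inr ⟨Or.inr rfl, Or.inr rfl⟩))⟩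
        have hq1v : q1 ≠ v := by
          have h := hq1.2
          simp only [mem_insert, mem_singleton] at h
          rcases h with rfl | rfl | rfl
          exacts [hxv, hyv, hzv]
        have hq1w : q1 ≠ w := by
          have h := hq1.2
          simp only [mem_insert, mem_singleton] at h
          rcases h with rfl | rfl | rfl
          exacts [hxw, hyw, hzw]
        have hq2y : q2 ≠ y := by
          have h := hq2.2
          simp only [mem_insert, mem_singleton] at h
          rcases h with rfl | rfl | rfl
          exacts [hxy, hyv.symm, hyw.symm]
        have hq2z : q2 ≠ z := by
          have h := hq2.2
          simp only [mem_insert, mem_singleton] at h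
          rcases h with rfl | rfl | rfl
          exacts [hxz, hzv.symm, hzw.symm]
        exact countPair T A U y z v w q1 q2 b1 b2 b3 b4 hyz hvw (hNA hyN) (hNA hzN)
          (hNA hvN) (hNA hwN) hq1A hq2A e12 e34 hUm h1 h2 h3 h4 hNT
          hq1.1 hq1v hq1w hq2.1 hq2y hq2z
    have hXcard : X.card ≤ U.card := by rw [hXdef]; exact card_image_le
    have hScard : S.card ≤ T.card := by
      have hc1 : S.card ≤ ((T \ A) ∪ X).card + 1 := by rw [hSdef]; exact card_insert_le _ _
      have hc2 : ((T \ A) ∪ X).card ≤ (T \ A).card + X.card := card_union_le _ _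
      have hc3 : (T \ A).card + (T ∩ A).card = T.card := card_sdiff_add_card_inter T A
      omega
    have hnotS : ∀ p ∈ N, p ∉ S := by
      intro p hp hmem
      rw [hSdef, mem_insert, mem_union] at hmem
      rcases hmem with rfl | hmem | hmem
      · exact hxN hp
      · exact (mem_sdiff.mp hmem).2 (hNA hp)
      · exact hXA p hmem (hNA hp)
    refine ⟨S, hSW, hShit, fun S' hS'W hS'h => le_trans hScard (hTmin S' hS'W hS'h),
      Or.inl ⟨by rw [hSdef]; exact mem_insert_self _ _,
        hnotS y hyN, hnotS z hzN, hnotS v hvN, hnotS w hwN⟩⟩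
end

section
/- Let G be a hypergraph in which every hyperedge has size exactly 3 and no two distinct vertices are contained in more than two common hyperedges. Let x be a vertex with d(x) = 2 whose two hyperedges intersect exactly in {x} (so |N(x)| = 4), such that I(x) = 0, d(p) = 3 for every p ∈ N(x), and |B(x)| = 4. Then every element of B(x) has size 2, every vertex of the bipartite graph H(x) has degree exactly 2 in H(x), and consequently H(x) is a disjoint union of cycles: it is either a disjoint union of two cycles of length 4 or a single cycle of length 8. -/
def stmt8mask : Fin 6 → Nat := ![3, 5, 9, 6, 10, 12]

def stmt8ment (e : Fin 6) (j : Fin 4) : Bool := (stmt8mask e >>> j.val) &&& 1 == 1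

def stmt8colcnt (a b c d : Fin 6) (j : Fin 4) : Nat :=
  (cond (stmt8ment a j) 1 0) + (cond (stmt8ment b j) 1 0) +
  (cond (stmt8ment c j) 1 0) + (cond (stmt8ment d j) 1 0)

def stmt8perms : List (Fin 4 → Fin 4) :=
  [![0,1,2,3], ![0,1,3,2], ![0,2,1,3], ![0,2,3,1], ![0,3,1,2], ![0,3,2,1],
   ![1,0,2,3], ![1,0,3,2], ![1,2,0,3], ![1,2,3,0], ![1,3,0,2], ![1,3,2,0],
   ![2,0,1,3], ![2,0,3,1], ![2,1,0,3], ![2,1,3,0], ![2,3,0,1], ![2,3,1,0],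
   ![3,0,1,2], ![3,0,2,1], ![3,1,0,2], ![3,1,2,0], ![3,2,0,1], ![3,2,1,0]]

def stmt8patA : Fin 4 → Fin 4 → Bool :=
  ![![true,true,false,false],![true,true,false,false],![false,false,true,true],![false,false,true,true]]

def stmt8patB : Fin 4 → Fin 4 → Bool :=
  ![![true,false,false,true],![true,true,false,false],![false,true,true,false],![false,false,true,true]]

def stmt8bit (a b c d : Fin 6) (i j : Fin 4) : Bool :=
  stmt8ment ((![a,b,c,d] : Fin 4 → Fin 6) i) j

def stmt8chk (a b c d : Fin 6) (pat : Fin 4 → Fin 4 → Bool) (σ τ : Fin 4 → Fin 4) : Bool :=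
  (stmt8bit a b c d (σ 0) (τ 0) == pat 0 0) && (stmt8bit a b c d (σ 0) (τ 1) == pat 0 1) &&
  (stmt8bit a b c d (σ 0) (τ 2) == pat 0 2) && (stmt8bit a b c d (σ 0) (τ 3) == pat 0 3) &&
  (stmt8bit a b c d (σ 1) (τ 0) == pat 1 0) && (stmt8bit a b c d (σ 1) (τ 1) == pat 1 1) &&
  (stmt8bit a b c d (σ 1) (τ 2) == pat 1 2) && (stmt8bit a b c d (σ 1) (τ 3) == pat 1 3) &&
  (stmt8bit a b c d (σ 2) (τ 0) == pat 2 0) && (stmt8bit a b c d (σ 2) (τ 1) == pat 2 1) &&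
  (stmt8bit a b c d (σ 2) (τ 2) == pat 2 2) && (stmt8bit a b c d (σ 2) (τ 3) == pat 2 3) &&
  (stmt8bit a b c d (σ 3) (τ 0) == pat 3 0) && (stmt8bit a b c d (σ 3) (τ 1) == pat 3 1) &&
  (stmt8bit a b c d (σ 3) (τ 2) == pat 3 2) && (stmt8bit a b c d (σ 3) (τ 3) == pat 3 3)

def stmt8find (a b c d : Fin 6) (pat : Fin 4 → Fin 4 → Bool) : Bool :=
  stmt8perms.any (fun σ => stmt8perms.any (fun τ => stmt8chk a b c d pat σ τ))

set_option maxRecDepth 10000 in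
lemma stmt8perms_bij : ∀ σ ∈ stmt8perms, Function.Bijective σ := by decide

set_option maxRecDepth 10000 in
lemma stmt8row_encode : ∀ r : Fin 4 → Bool,
    (Finset.univ.filter (fun j => r j = true)).card = 2 →
    ∃ e : Fin 6, ∀ j, r j = stmt8ment e j := by decide

set_option maxRecDepth 10000 in
lemma stmt8card4 : ∀ r : Fin 4 → Bool,
    (Finset.univ.filter (fun i => r i = true)).card =
      (cond (r 0) 1 0) + (cond (r 1) 1 0) + (cond (r 2) 1 0) + (cond (r 3) 1 0) := by decide

set_option maxRecDepth 10000 in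
lemma stmt8patA_iff : ∀ i j : Fin 4, stmt8patA i j = true ↔
    (((i = 0 ∨ i = 1) ∧ (j = 0 ∨ j = 1)) ∨ ((i = 2 ∨ i = 3) ∧ (j = 2 ∨ j = 3))) := by decide

set_option maxRecDepth 10000 in
lemma stmt8patB_iff : ∀ i j : Fin 4, stmt8patB i j = true ↔
    ((i = 0 ∧ j = 0) ∨ (i = 1 ∧ j = 0) ∨ (i = 1 ∧ j = 1) ∨ (i = 2 ∧ j = 1) ∨
     (i = 2 ∧ j = 2) ∨ (i = 3 ∧ j = 2) ∨ (i = 3 ∧ j = 3) ∨ (i = 0 ∧ j = 3)) := by decide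

set_option maxRecDepth 100000 in
set_option maxHeartbeats 4000000 in
lemma stmt8key : ∀ a b c d : Fin 6, a ≤ b → b ≤ c → c ≤ d →
    (∀ j, stmt8colcnt a b c d j = 2) →
    stmt8find a b c d stmt8patA = true ∨ stmt8find a b c d stmt8patB = true := by
  decide

lemma stmt8key' (M : Fin 4 → Fin 4 → Bool)
    (hrow : ∀ i, (Finset.univ.filter (fun j => M i j = true)).card = 2)
    (hcol : ∀ j, (Finset.univ.filter (fun i => M i j = true)).card = 2) :
    (∃ σ τ : Fin 4 → Fin 4, Function.Bijective σ ∧ Function.Bijective τ ∧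
        ∀ i j, M (σ i) (τ j) = stmt8patA i j) ∨
    (∃ σ τ : Fin 4 → Fin 4, Function.Bijective σ ∧ Function.Bijective τ ∧
        ∀ i j, M (σ i) (τ j) = stmt8patB i j) := by
  choose f hf using fun i => stmt8row_encode (M i) (hrow i)
  set ρ := Tuple.sort f with hρdef
  have hmono : Monotone (f ∘ ρ) := Tuple.monotone_sort f
  set g : Fin 4 → Fin 6 := f ∘ ρ with hgdef
  have hMg : ∀ i j, M (ρ i) j = stmt8ment (g i) j := fun i j => hf (ρ i) j
  have hg4 : (![g 0, g 1, g 2, g 3] : Fin 4 → Fin 6) = g := by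
    funext i; fin_cases i <;> rfl
  have hcolg : ∀ j, (Finset.univ.filter (fun i => stmt8ment (g i) j = true)).card = 2 := by
    intro j
    have hbij : (Finset.univ.filter (fun i => stmt8ment (g i) j = true)).card =
        (Finset.univ.filter (fun i => M i j = true)).card := by
      apply Finset.card_bij (fun i _ => ρ i)
      · intro a ha
        simp only [Finset.mem_filter, Finset.mem_univ, true_and] at ha ⊢
        rw [hMg]; exact ha
      · intro a _ b _ hab
        exact ρ.injective hab
      · intro c hc
        simp only [Finset.mem_filter, Finset.mem_univ, true_and] at hc ⊢
        refine ⟨ρ.symm c, ?_, by simp⟩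
        rw [← hMg, Equiv.apply_symm_apply]; exact hc
    rw [hbij]; exact hcol j
  have hcnt : ∀ j, stmt8colcnt (g 0) (g 1) (g 2) (g 3) j = 2 := by
    intro j
    have := stmt8card4 (fun i => stmt8ment (g i) j)
    rw [hcolg j] at this
    exact this.symm
  have h01 : (0 : Fin 4) ≤ 1 := by decide
  have h12 : (1 : Fin 4) ≤ 2 := by decide
  have h23 : (2 : Fin 4) ≤ 3 := by decide
  have hkey := stmt8key (g 0) (g 1) (g 2) (g 3) (hmono h01) (hmono h12) (hmono h23) hcnt
  have hbit : ∀ i j, stmt8bit (g 0) (g 1) (g 2) (g 3) i j = M (ρ i) j := by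
    intro i j
    unfold stmt8bit
    rw [hg4, ← hMg]
  rcases hkey with hfind | hfind
  · left
    rw [stmt8find, List.any_eq_true] at hfind
    obtain ⟨σ, hσmem, h2⟩ := hfind
    rw [List.any_eq_true] at h2
    obtain ⟨τ, hτmem, hchk⟩ := h2
    have hall : ∀ i j, stmt8bit (g 0) (g 1) (g 2) (g 3) (σ i) (τ j) = stmt8patA i j := by
      intro i j
      simp only [stmt8chk, Bool.and_eq_true, beq_iff_eq] at hchk
      fin_cases i <;> fin_cases j <;> tauto
    refine ⟨fun i => ρ (σ i), τ, ρ.bijective.comp (stmt8perms_bij σ hσmem),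
      stmt8perms_bij τ hτmem, fun i j => ?_⟩
    rw [← hbit, hall]
  · right
    rw [stmt8find, List.any_eq_true] at hfind
    obtain ⟨σ, hσmem, h2⟩ := hfind
    rw [List.any_eq_true] at h2
    obtain ⟨τ, hτmem, hchk⟩ := h2
    have hall : ∀ i j, stmt8bit (g 0) (g 1) (g 2) (g 3) (σ i) (τ j) = stmt8patB i j := by
      intro i j
      simp only [stmt8chk, Bool.and_eq_true, beq_iff_eq] at hchk
      fin_cases i <;> fin_cases j <;> tauto
    refine ⟨fun i => ρ (σ i), τ, ρ.bijective.comp (stmt8perms_bij σ hσmem),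
      stmt8perms_bij τ hτmem, fun i j => ?_⟩
    rw [← hbit, hall]



/-- Let `G` be a hypergraph (vertex set `W`, hyperedge set `E`) in which
every hyperedge has size exactly 3 and no two distinct vertices are contained in more
than two common hyperedges.  Let `x` be a vertex with `d(x) = 2` whose two hyperedges
intersect exactly in `{x}` (so `|N(x)| = 4`), such that `I(x) = 0`, `d(p) = 3` for
every `p ∈ N(x)`, and `|B(x)| = 4`, where
`B(x) = {e ∖ N(x) : e ∈ E, x ∉ e, e ∩ N(x) ≠ ∅}`.  Then every element of `B(x)` has
size 2, every vertex of the bipartite graph `H(x)` (parts `N(x)` and `B(x)`, with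
`p ~ b` iff `{p} ∪ b ∈ E`) has degree exactly 2 in `H(x)`, and `H(x)` is either a
disjoint union of two cycles of length 4 or a single cycle of length 8 (the final
disjunction lists the edges of `H(x)` explicitly in each case). -/
theorem stmt_8 {V : Type*} [DecidableEq V]
    (W : Finset V) (E : Finset (Finset V))
    (hE : ∀ e ∈ E, e ⊆ W ∧ e.card = 3)
    (hpair : ∀ a b : V, a ≠ b → (E.filter (fun e => a ∈ e ∧ b ∈ e)).card ≤ 2)
    (x : V) (hx : x ∈ W)
    (hdx : (E.filter (fun e => x ∈ e)).card = 2)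
    (hmeet : ∀ e1 ∈ E, ∀ e2 ∈ E, x ∈ e1 → x ∈ e2 → e1 ≠ e2 → e1 ∩ e2 = {x})
    (N : Finset V)
    (hNdef : N = W.filter (fun t => t ≠ x ∧ ∃ e ∈ E, x ∈ e ∧ t ∈ e))
    (hN4 : N.card = 4)
    (hI : ∀ e ∈ E, x ∉ e → (e ∩ N).card ≤ 1)
    (hdegN : ∀ p ∈ N, (E.filter (fun e => p ∈ e)).card = 3)
    (B : Finset (Finset V))
    (hBdef : B = (E.filter (fun e => x ∉ e ∧ (e ∩ N).Nonempty)).image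
      (fun e => e \ N))
    (hB : B.card = 4) :
    (∀ b ∈ B, b.card = 2) ∧
    (∀ p ∈ N, (B.filter (fun b => insert p b ∈ E)).card = 2) ∧
    (∀ b ∈ B, (N.filter (fun p => insert p b ∈ E)).card = 2) ∧
    ((∃ p1 p2 p3 p4 : V, ∃ b1 b2 b3 b4 : Finset V,
        N = {p1, p2, p3, p4} ∧ B = {b1, b2, b3, b4} ∧
        ({b1, b2, b3, b4} : Finset (Finset V)).card = 4 ∧
        ∀ p ∈ N, ∀ b ∈ B,
          (insert p b ∈ E ↔
            (((p = p1 ∨ p = p2) ∧ (b = b1 ∨ b = b2)) ∨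
             ((p = p3 ∨ p = p4) ∧ (b = b3 ∨ b = b4))))) ∨
     (∃ p1 p2 p3 p4 : V, ∃ b1 b2 b3 b4 : Finset V,
        N = {p1, p2, p3, p4} ∧ B = {b1, b2, b3, b4} ∧
        ({b1, b2, b3, b4} : Finset (Finset V)).card = 4 ∧
        ∀ p ∈ N, ∀ b ∈ B,
          (insert p b ∈ E ↔
            ((p = p1 ∧ b = b1) ∨ (p = p2 ∧ b = b1) ∨ (p = p2 ∧ b = b2) ∨
             (p = p3 ∧ b = b2) ∨ (p = p3 ∧ b = b3) ∨ (p = p4 ∧ b = b3) ∨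
             (p = p4 ∧ b = b4) ∨ (p = p1 ∧ b = b4))))) := by
  -- basic facts
  have hBelem : ∀ b ∈ B, ∃ e, e ∈ E ∧ x ∉ e ∧ (e ∩ N).card = 1 ∧ b = e \ N := by
    intro b hb
    rw [hBdef] at hb
    obtain ⟨e, he, rfl⟩ := Finset.mem_image.mp hb
    rw [Finset.mem_filter] at he
    obtain ⟨heE, hxe, hne⟩ := he
    exact ⟨e, heE, hxe, le_antisymm (hI e heE hxe) (Finset.card_pos.mpr hne), rfl⟩
  have part1 : ∀ b ∈ B, b.card = 2 := by
    intro b hb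
    obtain ⟨e, heE, hxe, hc1, rfl⟩ := hBelem b hb
    have h3 := (hE e heE).2
    have hie := Finset.card_inter_add_card_sdiff e N
    omega
  have hbcap : ∀ b ∈ B, ∀ q ∈ N, q ∉ b := by
    intro b hb q hq hqb
    obtain ⟨e, heE, hxe, hc1, rfl⟩ := hBelem b hb
    exact (Finset.mem_sdiff.mp hqb).2 hq
  -- exactly one edge contains both x and p
  have hxp1 : ∀ p ∈ N, (E.filter (fun e => p ∈ e ∧ x ∈ e)).card = 1 := by
    intro p hp
    rw [hNdef, Finset.mem_filter] at hp
    obtain ⟨hpW, hpx, e0, he0E, hxe0, hpe0⟩ := hp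
    rw [Finset.card_eq_one]
    refine ⟨e0, ?_⟩
    ext e
    simp only [Finset.mem_filter, Finset.mem_singleton]
    constructor
    · rintro ⟨heE, hpe, hxe⟩
      by_contra hne
      have hcap := hmeet e heE e0 he0E hxe hxe0 hne
      have hpm : p ∈ e ∩ e0 := Finset.mem_inter.mpr ⟨hpe, hpe0⟩
      rw [hcap, Finset.mem_singleton] at hpm
      exact hpx hpm
    · rintro rfl; exact ⟨he0E, hpe0, hxe0⟩
  have hpxne : ∀ p ∈ N, p ≠ x := by
    intro p hp; rw [hNdef, Finset.mem_filter] at hp; exact hp.2.1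
  -- the two edges through p avoiding x
  have hcapS : ∀ p ∈ N, ∀ e ∈ E, p ∈ e → x ∉ e → e ∩ N = {p} := by
    intro p hp e heE hpe hxe
    have hle := hI e heE hxe
    have hpm : p ∈ e ∩ N := Finset.mem_inter.mpr ⟨hpe, hp⟩
    apply Finset.eq_singleton_iff_unique_mem.mpr
    exact ⟨hpm, fun y hy => Finset.card_le_one.mp hle y hy p hpm⟩
  have heinsert : ∀ p ∈ N, ∀ e ∈ E, p ∈ e → x ∉ e → insert p (e \ N) = e := by
    intro p hp e heE hpe hxe
    rw [Finset.insert_eq, ← hcapS p hp e heE hpe hxe, Finset.union_comm,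
      Finset.sdiff_union_inter]
  have part2 : ∀ p ∈ N, (B.filter (fun b => insert p b ∈ E)).card = 2 := by
    intro p hp
    have hpx := hpxne p hp
    have hScard : (E.filter (fun e => p ∈ e ∧ x ∉ e)).card = 2 := by
      have hsplit := Finset.card_filter_add_card_filter_not
        (s := E.filter (fun e => p ∈ e)) (p := fun e => x ∈ e)
      rw [Finset.filter_filter, Finset.filter_filter, hdegN p hp, hxp1 p hp] at hsplit
      omega
    have key_eq : B.filter (fun b => insert p b ∈ E) =
        (E.filter (fun e => p ∈ e ∧ x ∉ e)).image (fun e => e \ N) := by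
      ext b
      simp only [Finset.mem_filter, Finset.mem_image]
      constructor
      · rintro ⟨hbB, hins⟩
        obtain ⟨e, heE, hxe, hc1, rfl⟩ := hBelem b hbB
        refine ⟨insert p (e \ N), ⟨hins, Finset.mem_insert_self _ _, ?_⟩, ?_⟩
        · simp only [Finset.mem_insert]
          rintro (rfl | hxb)
          · exact hpx rfl
          · exact hxe (Finset.mem_sdiff.mp hxb).1
        · rw [Finset.insert_sdiff_of_mem _ hp, Finset.sdiff_idem]
      · rintro ⟨e, ⟨heE, hpe, hxe⟩, rfl⟩
        constructor
        · rw [hBdef]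
          exact Finset.mem_image.mpr ⟨e, Finset.mem_filter.mpr ⟨heE, hxe,
            ⟨p, Finset.mem_inter.mpr ⟨hpe, hp⟩⟩⟩, rfl⟩
        · rw [heinsert p hp e heE hpe hxe]; exact heE
    rw [key_eq, Finset.card_image_of_injOn, hScard]
    intro e1 h1 e2 h2 heq
    simp only [Finset.coe_filter, Set.mem_setOf_eq] at h1 h2
    have heq' : e1 \ N = e2 \ N := heq
    rw [← heinsert p hp e1 h1.1 h1.2.1 h1.2.2, ← heinsert p hp e2 h2.1 h2.2.1 h2.2.2, heq']
  -- part 3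
  have part3le : ∀ b ∈ B, (N.filter (fun q => insert q b ∈ E)).card ≤ 2 := by
    intro b hb
    obtain ⟨u, v, huv, hbuv⟩ := Finset.card_eq_two.mp (part1 b hb)
    calc (N.filter (fun q => insert q b ∈ E)).card
        ≤ (E.filter (fun e => u ∈ e ∧ v ∈ e)).card := by
          apply Finset.card_le_card_of_injOn (fun q => insert q b)
          · intro q hq
            rw [Finset.mem_coe, Finset.mem_filter] at hq ⊢
            refine ⟨hq.2, ?_, ?_⟩
            · rw [hbuv]; simp
            · rw [hbuv]; simp
          · intro q1 h1 q2 h2 heq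
            simp only [Finset.coe_filter, Set.mem_setOf_eq] at h1 h2
            have heq' : insert q1 b = insert q2 b := heq
            have : q1 ∈ insert q2 b := by rw [← heq']; exact Finset.mem_insert_self _ _
            rcases Finset.mem_insert.mp this with h | h
            · exact h
            · exact absurd h (hbcap b hb q1 h1.1)
      _ ≤ 2 := hpair u v huv
  have hsum1 : ∑ p ∈ N, (B.filter (fun b => insert p b ∈ E)).card = 8 := by
    rw [Finset.sum_congr rfl (fun p hp => part2 p hp), Finset.sum_const, hN4,
      smul_eq_mul]
  have hsum2 : ∑ b ∈ B, (N.filter (fun q => insert q b ∈ E)).card = 8 := by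
    have e1 : ∑ p ∈ N, (B.filter (fun b => insert p b ∈ E)).card =
        ∑ p ∈ N, ∑ b ∈ B, ite (insert p b ∈ E) 1 0 :=
      Finset.sum_congr rfl (fun p _ => Finset.card_filter _ _)
    have e2 : ∑ b ∈ B, (N.filter (fun q => insert q b ∈ E)).card =
        ∑ b ∈ B, ∑ p ∈ N, ite (insert p b ∈ E) 1 0 :=
      Finset.sum_congr rfl (fun b _ => Finset.card_filter _ _)
    rw [e2, Finset.sum_comm, ← e1, hsum1]
  have part3 : ∀ b ∈ B, (N.filter (fun q => insert q b ∈ E)).card = 2 := by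
    by_contra hcon
    push_neg at hcon
    obtain ⟨b0, hb0, hne⟩ := hcon
    have hlt : ∑ b ∈ B, (N.filter (fun q => insert q b ∈ E)).card <
        ∑ _b ∈ B, 2 := by
      apply Finset.sum_lt_sum (fun b hb => part3le b hb)
      exact ⟨b0, hb0, lt_of_le_of_ne (part3le b0 hb0) hne⟩
    rw [hsum2, Finset.sum_const, hB, smul_eq_mul] at hlt
    omega
  refine ⟨part1, part2, part3, ?_⟩
  -- enumerations
  have hNl : N.toList.length = 4 := by rw [Finset.length_toList, hN4]
  have hBl : B.toList.length = 4 := by rw [Finset.length_toList, hB]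
  set pp : Fin 4 → V := fun i => N.toList.get (Fin.cast hNl.symm i) with hppdef
  set bb : Fin 4 → Finset V := fun j => B.toList.get (Fin.cast hBl.symm j) with hbbdef
  have hppinj : Function.Injective pp := by
    intro i j hij
    have h2 := List.nodup_iff_injective_get.mp N.nodup_toList hij
    exact Fin.ext (by simpa using congrArg Fin.val h2)
  have hbbinj : Function.Injective bb := by
    intro i j hij
    have h2 := List.nodup_iff_injective_get.mp B.nodup_toList hij
    exact Fin.ext (by simpa using congrArg Fin.val h2)
  have hppmem : ∀ i, pp i ∈ N :=
    fun i => Finset.mem_toList.mp (List.mem_iff_get.mpr ⟨_, rfl⟩)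
  have hbbmem : ∀ j, bb j ∈ B :=
    fun j => Finset.mem_toList.mp (List.mem_iff_get.mpr ⟨_, rfl⟩)
  have hNim : N = Finset.image pp Finset.univ := by
    refine (Finset.eq_of_subset_of_card_le ?_ ?_).symm
    · intro a ha
      obtain ⟨i, _, rfl⟩ := Finset.mem_image.mp ha
      exact hppmem i
    · rw [Finset.card_image_of_injective _ hppinj, hN4]; simp
  have hBim : B = Finset.image bb Finset.univ := by
    refine (Finset.eq_of_subset_of_card_le ?_ ?_).symm
    · intro a ha
      obtain ⟨j, _, rfl⟩ := Finset.mem_image.mp ha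
      exact hbbmem j
    · rw [Finset.card_image_of_injective _ hbbinj, hB]; simp
  -- matrix conditions
  have hrow : ∀ i, (Finset.univ.filter
      (fun j => (decide (insert (pp i) (bb j) ∈ E)) = true)).card = 2 := by
    intro i
    have h2 := part2 (pp i) (hppmem i)
    rw [hBim, Finset.filter_image, Finset.card_image_of_injective _ hbbinj] at h2
    simpa using h2
  have hcol : ∀ j, (Finset.univ.filter
      (fun i => (decide (insert (pp i) (bb j) ∈ E)) = true)).card = 2 := by
    intro j
    have h3 := part3 (bb j) (hbbmem j)
    rw [hNim, Finset.filter_image, Finset.card_image_of_injective _ hppinj] at h3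
    simpa using h3
  have hkey := stmt8key' (fun i j => decide (insert (pp i) (bb j) ∈ E)) hrow hcol
  have huniv4 : (Finset.univ : Finset (Fin 4)) = {0, 1, 2, 3} := by decide
  rcases hkey with ⟨σ, τ, hσ, hτ, hM⟩ | ⟨σ, τ, hσ, hτ, hM⟩
  · left
    set P : Fin 4 → V := fun i => pp (σ i) with hPdef
    set Q : Fin 4 → Finset V := fun j => bb (τ j) with hQdef
    have hPinj : Function.Injective P := hppinj.comp hσ.injective
    have hQinj : Function.Injective Q := hbbinj.comp hτ.injective
    have hNP : N = {P 0, P 1, P 2, P 3} := by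
      rw [hNim, ← Finset.image_univ_of_surjective hσ.surjective, Finset.image_image,
        huniv4]
      simp [Finset.image_insert, Function.comp]
      rfl
    have hBQ : B = {Q 0, Q 1, Q 2, Q 3} := by
      rw [hBim, ← Finset.image_univ_of_surjective hτ.surjective, Finset.image_image,
        huniv4]
      simp [Finset.image_insert, Function.comp]
      rfl
    have hmem : ∀ i j, (insert (P i) (Q j) ∈ E) ↔
        (((i = 0 ∨ i = 1) ∧ (j = 0 ∨ j = 1)) ∨ ((i = 2 ∨ i = 3) ∧ (j = 2 ∨ j = 3))) := by
      intro i j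
      rw [← stmt8patA_iff i j, ← hM i j]
      simp
      rfl
    refine ⟨P 0, P 1, P 2, P 3, Q 0, Q 1, Q 2, Q 3, hNP, hBQ, by rw [← hBQ]; exact hB, ?_⟩
    intro q hq c hc
    rw [hNP] at hq
    rw [hBQ] at hc
    simp only [Finset.mem_insert, Finset.mem_singleton] at hq hc
    rcases hq with rfl | rfl | rfl | rfl <;> rcases hc with rfl | rfl | rfl | rfl <;>
      (rw [hmem]; simp only [hPinj.eq_iff, hQinj.eq_iff]) <;> decide
  · right
    set P : Fin 4 → V := fun i => pp (σ i) with hPdef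
    set Q : Fin 4 → Finset V := fun j => bb (τ j) with hQdef
    have hPinj : Function.Injective P := hppinj.comp hσ.injective
    have hQinj : Function.Injective Q := hbbinj.comp hτ.injective
    have hNP : N = {P 0, P 1, P 2, P 3} := by
      rw [hNim, ← Finset.image_univ_of_surjective hσ.surjective, Finset.image_image,
        huniv4]
      simp [Finset.image_insert, Function.comp]
      rfl
    have hBQ : B = {Q 0, Q 1, Q 2, Q 3} := by
      rw [hBim, ← Finset.image_univ_of_surjective hτ.surjective, Finset.image_image,
        huniv4]
      simp [Finset.image_insert, Function.comp]
      rfl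
    have hmem : ∀ i j, (insert (P i) (Q j) ∈ E) ↔
        ((i = 0 ∧ j = 0) ∨ (i = 1 ∧ j = 0) ∨ (i = 1 ∧ j = 1) ∨ (i = 2 ∧ j = 1) ∨
         (i = 2 ∧ j = 2) ∨ (i = 3 ∧ j = 2) ∨ (i = 3 ∧ j = 3) ∨ (i = 0 ∧ j = 3)) := by
      intro i j
      rw [← stmt8patB_iff i j, ← hM i j]
      simp
      rfl
    refine ⟨P 0, P 1, P 2, P 3, Q 0, Q 1, Q 2, Q 3, hNP, hBQ, by rw [← hBQ]; exact hB, ?_⟩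
    intro q hq c hc
    rw [hNP] at hq
    rw [hBQ] at hc
    simp only [Finset.mem_insert, Finset.mem_singleton] at hq hc
    rcases hq with rfl | rfl | rfl | rfl <;> rcases hc with rfl | rfl | rfl | rfl <;>
      (rw [hmem]; simp only [hPinj.eq_iff, hQinj.eq_iff]) <;> decide
end

section
/- Let G be a hypergraph in which every hyperedge has size exactly 3 and no two distinct vertices are contained in more than two common hyperedges. Let x be a vertex with d(x) = 2 whose two hyperedges intersect exactly in {x} (so |N(x)| = 4), such that I(x) = 0, d(p) ≥ 2 for every p ∈ N(x), and I(p) = 0 for every p ∈ N(x) with d(p) = 2. Then |B(x)| ≥ 4. -/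
/-- Let `G` be a hypergraph (vertex set `W`, hyperedge set `E`) in which
every hyperedge has size exactly 3 and no two distinct vertices are contained in more
than two common hyperedges.  Let `x` be a vertex with `d(x) = 2` whose two hyperedges
intersect exactly in `{x}` (so `|N(x)| = 4`), such that `I(x) = 0`, `d(p) ≥ 2` for
every `p ∈ N(x)`, and `I(p) = 0` for every `p ∈ N(x)` with `d(p) = 2`.  Then
`|B(x)| ≥ 4`, where `B(x) = {e ∖ N(x) : e ∈ E, x ∉ e, e ∩ N(x) ≠ ∅}`. -/
theorem stmt_9 {V : Type*} [DecidableEq V]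
    (W : Finset V) (E : Finset (Finset V))
    (hE : ∀ e ∈ E, e ⊆ W ∧ e.card = 3)
    (hpair : ∀ a b : V, a ≠ b → (E.filter (fun e => a ∈ e ∧ b ∈ e)).card ≤ 2)
    (x : V) (hx : x ∈ W)
    (hdx : (E.filter (fun e => x ∈ e)).card = 2)
    (hmeet : ∀ e1 ∈ E, ∀ e2 ∈ E, x ∈ e1 → x ∈ e2 → e1 ≠ e2 → e1 ∩ e2 = {x})
    (N : Finset V)
    (hNdef : N = W.filter (fun t => t ≠ x ∧ ∃ e ∈ E, x ∈ e ∧ t ∈ e))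
    (hN4 : N.card = 4)
    (hI : ∀ e ∈ E, x ∉ e → (e ∩ N).card ≤ 1)
    (hdegN : ∀ p ∈ N, 2 ≤ (E.filter (fun e => p ∈ e)).card)
    (hIp : ∀ p ∈ N, (E.filter (fun e => p ∈ e)).card = 2 →
      ∀ e ∈ E, p ∉ e →
        (e ∩ W.filter (fun t => t ≠ p ∧ ∃ e' ∈ E, p ∈ e' ∧ t ∈ e')).card ≤ 1) :
    4 ≤ ((E.filter (fun e => x ∉ e ∧ (e ∩ N).Nonempty)).image
      (fun e => e \ N)).card := by
  classical
  -- abbreviations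
  set S : V → Finset (Finset V) := fun p => E.filter (fun e => p ∈ e ∧ x ∉ e) with hS
  set F : Finset (Finset V) := E.filter (fun e => x ∉ e ∧ (e ∩ N).Nonempty) with hF
  set L : Finset V := N.filter (fun p => (E.filter (fun e => p ∈ e)).card = 2) with hL
  set Hh : Finset V := N.filter (fun p => ¬ (E.filter (fun e => p ∈ e)).card = 2) with hH
  -- basic facts about N
  have h_pne_x : ∀ p ∈ N, p ≠ x := by
    intro p hp
    rw [hNdef] at hp
    exact (Finset.mem_filter.1 hp).2.1
  -- every edge in S p meets N exactly in {p}
  have h_inter : ∀ p ∈ N, ∀ e ∈ S p, e ∩ N = {p} := by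
    intro p hp e he
    rw [hS, Finset.mem_filter] at he
    obtain ⟨heE, hpe, hxe⟩ := he
    have hp1 : p ∈ e ∩ N := Finset.mem_inter.2 ⟨hpe, hp⟩
    have hc := hI e heE hxe
    apply Finset.eq_singleton_iff_unique_mem.2
    exact ⟨hp1, fun q hq => Finset.card_le_one.1 hc q hq p hp1⟩
  have h_SsubF : ∀ p ∈ N, S p ⊆ F := by
    intro p hp e he
    rw [hS, Finset.mem_filter] at he
    rw [hF, Finset.mem_filter]
    exact ⟨he.1, he.2.2, ⟨p, Finset.mem_inter.2 ⟨he.2.1, hp⟩⟩⟩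
  -- at most one edge contains both p and x
  have h_px : ∀ p ∈ N, (E.filter (fun e => p ∈ e ∧ x ∈ e)).card ≤ 1 := by
    intro p hp
    apply Finset.card_le_one.2
    intro a ha b hb
    rw [Finset.mem_filter] at ha hb
    by_contra hab
    have := hmeet a ha.1 b hb.1 ha.2.2 hb.2.2 hab
    have hpin : p ∈ a ∩ b := Finset.mem_inter.2 ⟨ha.2.1, hb.2.1⟩
    rw [this, Finset.mem_singleton] at hpin
    exact h_pne_x p hp hpin
  -- deg p ≤ |S p| + 1
  have h_Scard : ∀ p ∈ N, (E.filter (fun e => p ∈ e)).card ≤ (S p).card + 1 := by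
    intro p hp
    have hsplit := Finset.card_filter_add_card_filter_not
      (s := E.filter (fun e => p ∈ e)) (fun e => x ∈ e)
    rw [Finset.filter_filter, Finset.filter_filter] at hsplit
    have h1 : (E.filter (fun e => p ∈ e ∧ x ∈ e)).card ≤ 1 := h_px p hp
    have h2 : E.filter (fun e => p ∈ e ∧ ¬ x ∈ e) = S p := by rw [hS]
    rw [h2] at hsplit
    omega
  -- the collision lemma
  have h_collide : ∀ p ∈ N, ∀ q ∈ N, p ≠ q → ∀ e ∈ S p, ∀ f ∈ S q,
      e \ N = f \ N → (E.filter (fun e => p ∈ e)).card ≠ 2 := by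
    intro p hp q hq hpq e he f hf heq hdp
    have heN : e ∩ N = {p} := h_inter p hp e he
    have hfN : f ∩ N = {q} := h_inter q hq f hf
    rw [hS, Finset.mem_filter] at he hf
    have hpf : p ∉ f := by
      intro hpf
      have : p ∈ f ∩ N := Finset.mem_inter.2 ⟨hpf, hp⟩
      rw [hfN, Finset.mem_singleton] at this
      exact hpq this
    have hcon := hIp p hp hdp f hf.1 hpf
    -- e \ N has two elements and is contained in f ∩ N(p)
    have hcard : (e \ N).card = 2 := by
      have h3 := (hE e he.1).2
      have h1 : (e ∩ N).card = 1 := by rw [heN]; simp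
      have := Finset.card_inter_add_card_sdiff e N
      omega
    have hsub : e \ N ⊆ f ∩ W.filter (fun t => t ≠ p ∧ ∃ e' ∈ E, p ∈ e' ∧ t ∈ e') := by
      intro u hu
      have hue : u ∈ e := (Finset.mem_sdiff.1 hu).1
      have huN : u ∉ N := (Finset.mem_sdiff.1 hu).2
      have huf : u ∈ f := by
        have : u ∈ f \ N := heq ▸ hu
        exact (Finset.mem_sdiff.1 this).1
      refine Finset.mem_inter.2 ⟨huf, Finset.mem_filter.2 ⟨(hE e he.1).1 hue, ?_, e, he.1, he.2.1, hue⟩⟩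
      intro hup
      exact huN (hup ▸ hp)
    have := Finset.card_le_card hsub
    omega
  -- partition F into F_L and F_H
  set FL : Finset (Finset V) := F.filter (fun e => e ∩ N ⊆ L) with hFL
  set FH : Finset (Finset V) := F.filter (fun e => ¬ e ∩ N ⊆ L) with hFH
  -- each edge of F lies in some S p
  have h_nu : ∀ e ∈ F, ∃ p ∈ N, e ∩ N = {p} ∧ e ∈ S p := by
    intro e he
    rw [hF, Finset.mem_filter] at he
    obtain ⟨heE, hxe, p, hpmem⟩ := he
    have hpe : p ∈ e := (Finset.mem_inter.1 hpmem).1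
    have hpN : p ∈ N := (Finset.mem_inter.1 hpmem).2
    have heS : e ∈ S p := by rw [hS, Finset.mem_filter]; exact ⟨heE, hpe, hxe⟩
    exact ⟨p, hpN, h_inter p hpN e heS, heS⟩
  set BL : Finset (Finset V) := FL.image (fun e => e \ N) with hBL
  set BH : Finset (Finset V) := FH.image (fun e => e \ N) with hBH
  -- disjointness of BL and BH
  have hdisjB : Disjoint BL BH := by
    rw [Finset.disjoint_left]
    intro b hbL hbH
    rw [hBL, Finset.mem_image] at hbL
    rw [hBH, Finset.mem_image] at hbH
    obtain ⟨e, heFL, hebe⟩ := hbL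
    obtain ⟨f, hfFH, hfbf⟩ := hbH
    rw [hFL, Finset.mem_filter] at heFL
    rw [hFH, Finset.mem_filter] at hfFH
    obtain ⟨p, hpN, hepN, heS⟩ := h_nu e heFL.1
    obtain ⟨q, hqN, hfqN, hfS⟩ := h_nu f hfFH.1
    have hpL : p ∈ L := heFL.2 (by rw [hepN]; exact Finset.mem_singleton_self p)
    have hqL : q ∉ L := by
      intro hqL
      apply hfFH.2
      rw [hfqN]
      exact Finset.singleton_subset_iff.2 hqL
    have hpq : p ≠ q := fun h => hqL (h ▸ hpL)
    have hdp : (E.filter (fun e => p ∈ e)).card = 2 := (Finset.mem_filter.1 hpL).2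
    exact h_collide p hpN q hqN hpq e heS f hfS (by rw [hebe, hfbf]) hdp
  -- |L| ≤ |BL| via an injection
  have hcardL : L.card ≤ BL.card := by
    have hchoice : ∀ p ∈ L, (S p).Nonempty := by
      intro p hp
      rw [hL, Finset.mem_filter] at hp
      have := h_Scard p hp.1
      rw [hp.2] at this
      rw [← Finset.card_pos]
      omega
    apply Finset.card_le_card_of_injOn
      (fun p => if h : (S p).Nonempty then h.choose \ N else ∅)
    · intro p hp
      show (if h : (S p).Nonempty then h.choose \ N else ∅) ∈ BL
      rw [dif_pos (hchoice p hp)]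
      have hpN : p ∈ N := (Finset.mem_filter.1 hp).1
      have hmem := (hchoice p hp).choose_spec
      rw [hBL, Finset.mem_image]
      refine ⟨(hchoice p hp).choose, ?_, rfl⟩
      rw [hFL, Finset.mem_filter]
      refine ⟨h_SsubF p hpN hmem, ?_⟩
      rw [h_inter p hpN _ hmem]
      exact Finset.singleton_subset_iff.2 hp
    · intro p hp q hq hgpq
      simp only [Finset.mem_coe] at hp hq
      by_contra hpq
      replace hgpq : (if h : (S p).Nonempty then h.choose \ N else ∅)
          = (if h : (S q).Nonempty then h.choose \ N else ∅) := hgpq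
      rw [dif_pos (hchoice p hp), dif_pos (hchoice q hq)] at hgpq
      have hpN : p ∈ N := (Finset.mem_filter.1 hp).1
      have hqN : q ∈ N := (Finset.mem_filter.1 hq).1
      have hdp : (E.filter (fun e => p ∈ e)).card = 2 := (Finset.mem_filter.1 hp).2
      exact h_collide p hpN q hqN hpq _ (hchoice p hp).choose_spec _
        (hchoice q hq).choose_spec hgpq hdp
  -- |H| ≤ |BH| by fiber counting
  have hcardH : Hh.card ≤ BH.card := by
    -- lower bound: FH contains the disjoint union of S p over p ∈ H
    have hdisjS : ∀ p ∈ Hh, ∀ q ∈ Hh, p ≠ q → Disjoint (S p) (S q) := by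
      intro p hp q hq hpq
      rw [Finset.disjoint_left]
      intro e hep heq
      have hpN : p ∈ N := (Finset.mem_filter.1 hp).1
      have hqN : q ∈ N := (Finset.mem_filter.1 hq).1
      have h1 := h_inter p hpN e hep
      have h2 := h_inter q hqN e heq
      rw [h1] at h2
      exact hpq (Finset.singleton_injective h2)
    have hsubFH : Hh.biUnion S ⊆ FH := by
      intro e he
      rw [Finset.mem_biUnion] at he
      obtain ⟨p, hp, heS⟩ := he
      have hpN : p ∈ N := (Finset.mem_filter.1 hp).1
      rw [hFH, Finset.mem_filter]
      refine ⟨h_SsubF p hpN heS, ?_⟩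
      rw [h_inter p hpN e heS]
      intro hsub
      have hpL : p ∈ L := Finset.singleton_subset_iff.1 hsub
      exact (Finset.mem_filter.1 hp).2 (Finset.mem_filter.1 hpL).2
    have hSp2 : ∀ p ∈ Hh, 2 ≤ (S p).card := by
      intro p hp
      have hpN : p ∈ N := (Finset.mem_filter.1 hp).1
      have hne2 : (E.filter (fun e => p ∈ e)).card ≠ 2 := (Finset.mem_filter.1 hp).2
      have hge2 := hdegN p hpN
      have := h_Scard p hpN
      omega
    have hFHlb : 2 * Hh.card ≤ FH.card := by
      calc 2 * Hh.card = ∑ _p ∈ Hh, 2 := by rw [Finset.sum_const, smul_eq_mul, mul_comm]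
        _ ≤ ∑ p ∈ Hh, (S p).card := Finset.sum_le_sum hSp2
        _ = (Hh.biUnion S).card := (Finset.card_biUnion hdisjS).symm
        _ ≤ FH.card := Finset.card_le_card hsubFH
    -- upper bound: fibers of e ↦ e \ N on F have at most 2 elements
    have hfiber : ∀ b ∈ BH, (FH.filter (fun e => e \ N = b)).card ≤ 2 := by
      intro b hb
      by_contra hcon
      push_neg at hcon
      obtain ⟨e, he, f, hf, g, hg, hef, heg, hfg⟩ := Finset.two_lt_card.1 hcon
      rw [Finset.mem_filter] at he hf hg
      -- b has two distinct elements
      have hbcard : 2 ≤ b.card := by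
        have heF : e ∈ F := (Finset.mem_filter.1 he.1).1
        have heE : e ∈ E := (Finset.mem_filter.1 heF).1
        obtain ⟨p, hpN, hepN, -⟩ := h_nu e heF
        have h3 := (hE e heE).2
        have h1 : (e ∩ N).card = 1 := by rw [hepN]; simp
        have := Finset.card_inter_add_card_sdiff e N
        rw [he.2] at this
        omega
      obtain ⟨u, hu, v, hv, huv⟩ := Finset.one_lt_card.1 hbcard
      have hmemE : ∀ c : Finset V, c ∈ FH → c \ N = b → c ∈ E.filter (fun e => u ∈ e ∧ v ∈ e) := by
        intro c hc hcb
        have hcF : c ∈ F := (Finset.mem_filter.1 hc).1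
        have hcE : c ∈ E := (Finset.mem_filter.1 hcF).1
        have hbc : b ⊆ c := by rw [← hcb]; exact Finset.sdiff_subset
        exact Finset.mem_filter.2 ⟨hcE, hbc hu, hbc hv⟩
      have hsub3 : ({e, f, g} : Finset (Finset V)) ⊆ E.filter (fun e => u ∈ e ∧ v ∈ e) := by
        intro c hc
        simp only [Finset.mem_insert, Finset.mem_singleton] at hc
        rcases hc with rfl | rfl | rfl
        · exact hmemE c he.1 he.2
        · exact hmemE c hf.1 hf.2
        · exact hmemE c hg.1 hg.2
      have h3card : ({e, f, g} : Finset (Finset V)).card = 3 := by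
        rw [Finset.card_insert_of_notMem (by simp [hef, heg]),
          Finset.card_insert_of_notMem (by simp [hfg]), Finset.card_singleton]
      have := Finset.card_le_card hsub3
      have := hpair u v huv
      omega
    have hFHub : FH.card ≤ 2 * BH.card := by
      have hmap : ∀ e ∈ FH, e \ N ∈ BH := by
        intro e he
        rw [hBH, Finset.mem_image]
        exact ⟨e, he, rfl⟩
      calc FH.card = ∑ b ∈ BH, (FH.filter (fun e => e \ N = b)).card :=
            Finset.card_eq_sum_card_fiberwise hmap
        _ ≤ ∑ _b ∈ BH, 2 := Finset.sum_le_sum hfiber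
        _ = 2 * BH.card := by rw [Finset.sum_const, smul_eq_mul, mul_comm]
    omega
  -- assemble
  have hLH : L.card + Hh.card = 4 := by
    rw [hL, hH, Finset.card_filter_add_card_filter_not, hN4]
  have hBsub : BL ∪ BH ⊆ F.image (fun e => e \ N) := by
    apply Finset.union_subset
    · exact Finset.image_subset_image (Finset.filter_subset _ _)
    · exact Finset.image_subset_image (Finset.filter_subset _ _)
  have hBcard : BL.card + BH.card ≤ (F.image (fun e => e \ N)).card := by
    rw [← Finset.card_union_of_disjoint hdisjB]
    exact Finset.card_le_card hBsub
  omega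
end

section
/- Let G be a connected 3-hypergraph in which every vertex has degree at most 3, and let G' be a hypergraph obtained from G either by deleting a single vertex or by deleting a single hyperedge. Then G' is good. -/
/-- Two vertices are connected in the hypergraph with hyperedge set `E` if they are
joined by a sequence of vertices in which each consecutive pair lies in a common
hyperedge. -/
def HGConn {V : Type*} (E : Finset (Finset V)) : V → V → Prop :=
  Relation.ReflTransGen (fun a b => ∃ e ∈ E, a ∈ e ∧ b ∈ e)

/-- `T` is (the vertex set of) a connected component of the hypergraph with vertex set
`W` and hyperedge set `E`: a nonempty maximal set of pairwise connected vertices,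
i.e. a connectivity class. -/
def HGIsComponent {V : Type*} (W : Finset V) (E : Finset (Finset V))
    (T : Finset V) : Prop :=
  T.Nonempty ∧ T ⊆ W ∧ ∀ a ∈ T, ∀ b ∈ W, (HGConn E a b ↔ b ∈ T)

/-- A hypergraph (vertex set `W`, hyperedge set `E`) is good if (1) every hyperedge
has size at most 3, (2) every vertex has degree at most 3, and (3) every connected
component contains a hyperedge of size at most 2 or a vertex of degree at most 2
(the hyperedges of a component are the hyperedges of the graph contained in it). -/
def HGGood {V : Type*} [DecidableEq V] (W : Finset V)
    (E : Finset (Finset V)) : Prop :=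
  (∀ e ∈ E, e.card ≤ 3) ∧
  (∀ v ∈ W, (E.filter (fun e => v ∈ e)).card ≤ 3) ∧
  (∀ T : Finset V, HGIsComponent W E T →
    (∃ e ∈ E, e ⊆ T ∧ e.card ≤ 2) ∨
    (∃ v ∈ T, (E.filter (fun e => v ∈ e)).card ≤ 2))

private lemma conn_erase_edge {V : Type*} [DecidableEq V] {E : Finset (Finset V)}
    {e : Finset V} {a b : V} (h : HGConn E a b) :
    HGConn (E.erase e) a b ∨ ∃ c, HGConn (E.erase e) a c ∧ c ∈ e := by
  induction h with
  | refl => exact Or.inl Relation.ReflTransGen.refl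
  | tail ham hmb ih =>
    obtain ⟨f, hf, hm, hb⟩ := hmb
    rcases ih with ih | ih
    · by_cases hfe : f = e
      · exact Or.inr ⟨_, ih, hfe ▸ hm⟩
      · exact Or.inl (ih.tail ⟨f, Finset.mem_erase.2 ⟨hfe, hf⟩, hm, hb⟩)
    · exact Or.inr ih

private lemma conn_erase_vertex {V : Type*} [DecidableEq V] {E : Finset (Finset V)}
    {x : V} {a b : V} (hax : a ≠ x) (h : HGConn E a b) :
    (b ≠ x ∧ HGConn ((E.filter (fun e => e ≠ {x})).image (fun e => e.erase x)) a b) ∨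
    ∃ c f, c ≠ x ∧ HGConn ((E.filter (fun e => e ≠ {x})).image (fun e => e.erase x)) a c ∧
      f ∈ E ∧ x ∈ f ∧ c ∈ f := by
  induction h with
  | refl => exact Or.inl ⟨hax, Relation.ReflTransGen.refl⟩
  | tail ham hmb ih =>
    obtain ⟨f, hf, hm, hb⟩ := hmb
    rcases ih with ⟨hmx, ih⟩ | ih
    · by_cases hxf : x ∈ f
      · exact Or.inr ⟨_, f, hmx, ih, hf, hxf, hm⟩
      · refine Or.inl ⟨fun hbx => hxf (hbx ▸ hb), ih.tail ⟨f.erase x, ?_, ?_, ?_⟩⟩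
        · exact Finset.mem_image.2 ⟨f, Finset.mem_filter.2 ⟨hf,
            fun hfx => hxf (hfx ▸ Finset.mem_singleton_self x)⟩, rfl⟩
        · exact Finset.mem_erase.2 ⟨hmx, hm⟩
        · exact Finset.mem_erase.2 ⟨fun hbx => hxf (hbx ▸ hb), hb⟩
    · exact Or.inr ih

private lemma deg_erase_edge {V : Type*} [DecidableEq V] {E : Finset (Finset V)}
    {e : Finset V} {v : V} (heE : e ∈ E) (hve : v ∈ e)
    (hd : (E.filter (fun f => v ∈ f)).card ≤ 3) :
    ((E.erase e).filter (fun f => v ∈ f)).card ≤ 2 := by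
  have hsub : (E.erase e).filter (fun f => v ∈ f) ⊆ (E.filter (fun f => v ∈ f)).erase e := by
    intro f hf
    simp only [Finset.mem_filter, Finset.mem_erase] at *
    tauto
  have h1 := Finset.card_erase_of_mem (Finset.mem_filter.2 ⟨heE, hve⟩ :
    e ∈ E.filter (fun f => v ∈ f))
  have h2 := Finset.card_le_card hsub
  omega

/-- Let `G` be a connected 3-hypergraph (vertex set `W`, hyperedge set
`E`) in which every vertex has degree at most 3, and let `G'` (vertex set `W'`,
hyperedge set `E'`) be obtained from `G` either by deleting a single vertex `x`
(vertex set `W ∖ {x}`, hyperedge set `{e ∖ {x} : e ∈ E, e ≠ {x}}`) or by deleting a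
single hyperedge `e` (vertex set `W`, hyperedge set `E ∖ {e}`).  Then `G'` is good. -/
theorem stmt_13 {V : Type*} [DecidableEq V]
    (W : Finset V) (E : Finset (Finset V))
    (hE : ∀ e ∈ E, e.Nonempty ∧ e ⊆ W ∧ e.card ≤ 3)
    (hdeg : ∀ v ∈ W, (E.filter (fun e => v ∈ e)).card ≤ 3)
    (hconn : ∀ a ∈ W, ∀ b ∈ W, HGConn E a b)
    (W' : Finset V) (E' : Finset (Finset V))
    (h : (∃ x ∈ W, W' = W.erase x ∧
            E' = (E.filter (fun e => e ≠ {x})).image (fun e => e.erase x)) ∨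
         (∃ e ∈ E, W' = W ∧ E' = E.erase e)) :
    HGGood W' E' := by
  obtain ⟨x, hxW, hW', hE'⟩ | ⟨e, heE, hW', hE'⟩ := h
  · subst hW' hE'
    refine ⟨?_, ?_, ?_⟩
    · intro e' he'
      obtain ⟨g, hg, rfl⟩ := Finset.mem_image.1 he'
      exact le_trans (Finset.card_le_card (Finset.erase_subset _ _))
        (hE g (Finset.mem_filter.1 hg).1).2.2
    · intro v hv
      obtain ⟨hvx, hvW⟩ := Finset.mem_erase.1 hv
      have hsub : ((E.filter (fun e => e ≠ {x})).image (fun e => e.erase x)).filter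
          (fun e => v ∈ e) ⊆ (E.filter (fun e => v ∈ e)).image (fun e => e.erase x) := by
        intro e' he'
        obtain ⟨he'', hve'⟩ := Finset.mem_filter.1 he'
        obtain ⟨g, hg, rfl⟩ := Finset.mem_image.1 he''
        exact Finset.mem_image.2 ⟨g, Finset.mem_filter.2 ⟨(Finset.mem_filter.1 hg).1,
          Finset.mem_of_mem_erase hve'⟩, rfl⟩
      exact le_trans (le_trans (Finset.card_le_card hsub) Finset.card_image_le) (hdeg v hvW)
    · intro T hT
      obtain ⟨⟨t, htT⟩, hTW, hcomp⟩ := hT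
      obtain ⟨htx, htW⟩ := Finset.mem_erase.1 (hTW htT)
      rcases conn_erase_vertex htx (hconn t htW x hxW) with
        ⟨hxx, _⟩ | ⟨c, f, hcx, hc, hfE, hxf, hcf⟩
      · exact absurd rfl hxx
      · have hcW' : c ∈ W.erase x := Finset.mem_erase.2 ⟨hcx, (hE f hfE).2.1 hcf⟩
        have hcT : c ∈ T := (hcomp t htT c hcW').1 hc
        have hfne : f ≠ {x} := fun h => hcx (by simpa [h] using hcf)
        have hfE' : f.erase x ∈ (E.filter (fun e => e ≠ {x})).image (fun e => e.erase x) :=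
          Finset.mem_image.2 ⟨f, Finset.mem_filter.2 ⟨hfE, hfne⟩, rfl⟩
        refine Or.inl ⟨f.erase x, hfE', ?_, ?_⟩
        · intro w hw
          obtain ⟨hwx, hwf⟩ := Finset.mem_erase.1 hw
          have hwW' : w ∈ W.erase x := Finset.mem_erase.2 ⟨hwx, (hE f hfE).2.1 hwf⟩
          exact (hcomp c hcT w hwW').1 (Relation.ReflTransGen.single
            ⟨f.erase x, hfE', Finset.mem_erase.2 ⟨hcx, hcf⟩, hw⟩)
        · have h3 := (hE f hfE).2.2
          have h1 : (f.erase x).card = f.card - 1 := Finset.card_erase_of_mem hxf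
          omega
  · rw [hW', hE']
    refine ⟨?_, ?_, ?_⟩
    · exact fun e' he' => (hE e' (Finset.mem_of_mem_erase he')).2.2
    · intro v hv
      exact le_trans (Finset.card_le_card (Finset.filter_subset_filter _
        (Finset.erase_subset _ _))) (hdeg v hv)
    · intro T hT
      obtain ⟨⟨t, htT⟩, hTW, hcomp⟩ := hT
      have htW : t ∈ W := hTW htT
      obtain ⟨u, hue⟩ := (hE e heE).1
      have huW : u ∈ W := (hE e heE).2.1 hue
      rcases conn_erase_edge (E := E) (e := e) (hconn t htW u huW) with hc | ⟨c, hc, hce⟩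
      · exact Or.inr ⟨u, (hcomp t htT u huW).1 hc, deg_erase_edge heE hue (hdeg u huW)⟩
      · have hcW : c ∈ W := (hE e heE).2.1 hce
        exact Or.inr ⟨c, (hcomp t htT c hcW).1 hc, deg_erase_edge heE hce (hdeg c hcW)⟩
end

section
/- Let G be a good hypergraph, and let G' be a hypergraph obtained from G either by deleting a single vertex or by deleting a single hyperedge. Then G' is good. -/
lemma hgconn_mono {V : Type*} {E E' : Finset (Finset V)}
    (h : ∀ a b : V, (∃ e ∈ E', a ∈ e ∧ b ∈ e) → (∃ e ∈ E, a ∈ e ∧ b ∈ e)) :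
    ∀ a b : V, HGConn E' a b → HGConn E a b :=
  fun a b hab => Relation.ReflTransGen.mono (fun x y => h x y) a b hab

lemma hg_absorb {V : Type*} {W : Finset V} {E : Finset (Finset V)} {T : Finset V}
    (hT : HGIsComponent W E T) {e : Finset V} (he : e ∈ E) (heW : e ⊆ W)
    {a : V} (ha : a ∈ e) (haT : a ∈ T) : e ⊆ T := by
  intro b hb
  exact (hT.2.2 a haT b (heW hb)).mp (Relation.ReflTransGen.single ⟨e, he, ha, hb⟩)

lemma hg_comp_lift {V : Type*} {W W' : Finset V} {E E' : Finset (Finset V)} {T : Finset V}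
    (hT : HGIsComponent W' E' T) (hTW : T ⊆ W)
    (hconn : ∀ a b : V, HGConn E' a b → HGConn E a b)
    (hclosed : ∀ e ∈ E, ∀ a ∈ e, a ∈ T → e ⊆ T) :
    HGIsComponent W E T := by
  refine ⟨hT.1, hTW, fun a haT b hbW => ⟨fun hab => ?_, fun hbT => hconn a b ((hT.2.2 a haT b (hT.2.1 hbT)).mpr hbT)⟩⟩
  clear hconn hbW
  induction hab with
  | refl => exact haT
  | tail h1 h2 ih =>
    obtain ⟨e, he, hc, hd⟩ := h2
    exact hclosed e he _ hc ih hd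

lemma hg_deg_image_le {V : Type*} [DecidableEq V] (E : Finset (Finset V)) (x v : V)
    (hv : v ≠ x) :
    (((E.filter (fun e => e ≠ ({x} : Finset V))).image (fun e => e.erase x)).filter
      (fun e => v ∈ e)).card ≤ (E.filter (fun e => v ∈ e)).card := by
  have hsub : ((E.filter (fun e => e ≠ ({x} : Finset V))).image (fun e => e.erase x)).filter
      (fun e => v ∈ e) ⊆ (E.filter (fun e => v ∈ e)).image (fun e => e.erase x) := by
    intro e' he'
    simp only [Finset.mem_filter, Finset.mem_image] at he' ⊢
    obtain ⟨⟨e, he, rfl⟩, hve⟩ := he'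
    exact ⟨e, ⟨he.1, Finset.mem_of_mem_erase hve⟩, rfl⟩
  exact le_trans (Finset.card_le_card hsub) (Finset.card_image_le)

/-- Let `G` be a good hypergraph (vertex set `W`, hyperedge set `E`),
and let `G'` (vertex set `W'`, hyperedge set `E'`) be obtained from `G` either by
deleting a single vertex `x` (vertex set `W ∖ {x}`, hyperedge set
`{e ∖ {x} : e ∈ E, e ≠ {x}}`) or by deleting a single hyperedge `e` (vertex set `W`,
hyperedge set `E ∖ {e}`).  Then `G'` is good. -/
theorem stmt_14 {V : Type*} [DecidableEq V]
    (W : Finset V) (E : Finset (Finset V))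
    (hE : ∀ e ∈ E, e.Nonempty ∧ e ⊆ W)
    (hgood : HGGood W E)
    (W' : Finset V) (E' : Finset (Finset V))
    (h : (∃ x ∈ W, W' = W.erase x ∧
            E' = (E.filter (fun e => e ≠ {x})).image (fun e => e.erase x)) ∨
         (∃ e ∈ E, W' = W ∧ E' = E.erase e)) :
    HGGood W' E' := by
  obtain ⟨hcard, hdeg, hcomp⟩ := hgood
  rcases h with ⟨x, hxW, rfl, rfl⟩ | ⟨e₀, he₀, rfl, rfl⟩
  · -- vertex deletion
    refine ⟨?_, ?_, ?_⟩
    · intro e' he'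
      simp only [Finset.mem_image, Finset.mem_filter] at he'
      obtain ⟨e, ⟨he, _⟩, rfl⟩ := he'
      exact le_trans (Finset.card_le_card (Finset.erase_subset x e)) (hcard e he)
    · intro v hv
      have hvx : v ≠ x := Finset.ne_of_mem_erase hv
      exact le_trans (hg_deg_image_le E x v hvx) (hdeg v (Finset.mem_of_mem_erase hv))
    · intro T hT
      by_cases hx : ∃ v ∈ T, ∃ e ∈ E, v ∈ e ∧ x ∈ e
      · obtain ⟨v, hvT, e, heE, hve, hxe⟩ := hx
        have hvx : v ≠ x := Finset.ne_of_mem_erase (hT.2.1 hvT)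
        have hene : e ≠ ({x} : Finset V) := by
          intro heq; rw [heq, Finset.mem_singleton] at hve; exact hvx hve
        have heE' : e.erase x ∈ (E.filter (fun e => e ≠ ({x} : Finset V))).image
            (fun e => e.erase x) :=
          Finset.mem_image_of_mem _ (Finset.mem_filter.mpr ⟨heE, hene⟩)
        have hveE : v ∈ e.erase x := Finset.mem_erase.mpr ⟨hvx, hve⟩
        have hW' : e.erase x ⊆ W.erase x := Finset.erase_subset_erase x (hE e heE).2
        have hsub : e.erase x ⊆ T := hg_absorb hT heE' hW' hveE hvT
        refine Or.inl ⟨e.erase x, heE', hsub, ?_⟩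
        have h3 : e.card ≤ 3 := hcard e heE
        rw [Finset.card_erase_of_mem hxe]
        omega
      · push_neg at hx
        have hclosed : ∀ e ∈ E, ∀ a ∈ e, a ∈ T → e ⊆ T := by
          intro e he a ha haT
          have hxe : x ∉ e := hx a haT e he ha
          have hene : e ≠ ({x} : Finset V) := by
            intro heq; rw [heq] at hxe; exact hxe (Finset.mem_singleton_self x)
          have heq : e.erase x = e := Finset.erase_eq_of_notMem hxe
          have heE' : e ∈ (E.filter (fun e => e ≠ ({x} : Finset V))).image
              (fun e => e.erase x) := by
            rw [← heq]
            exact Finset.mem_image_of_mem _ (Finset.mem_filter.mpr ⟨he, hene⟩)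
          have hW' : e ⊆ W.erase x := fun b hb =>
            Finset.mem_erase.mpr ⟨fun hbx => hxe (hbx ▸ hb), (hE e he).2 hb⟩
          exact hg_absorb hT heE' hW' ha haT
        have hconn : ∀ a b : V, HGConn ((E.filter (fun e => e ≠ ({x} : Finset V))).image
            (fun e => e.erase x)) a b → HGConn E a b := by
          apply hgconn_mono
          intro a b ⟨e', he', ha, hb⟩
          simp only [Finset.mem_image, Finset.mem_filter] at he'
          obtain ⟨e, ⟨he, _⟩, rfl⟩ := he'
          exact ⟨e, he, Finset.mem_of_mem_erase ha, Finset.mem_of_mem_erase hb⟩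
        have hcompT : HGIsComponent W E T :=
          hg_comp_lift hT (hT.2.1.trans (Finset.erase_subset x W)) hconn hclosed
        rcases hcomp T hcompT with ⟨f, hfE, hfT, hfc⟩ | ⟨v, hvT, hvdeg⟩
        · have hxf : x ∉ f := fun hxf =>
            Finset.notMem_erase x W (hT.2.1 (hfT hxf))
          have hfne : f ≠ ({x} : Finset V) := by
            intro heq; rw [heq] at hxf; exact hxf (Finset.mem_singleton_self x)
          refine Or.inl ⟨f, ?_, hfT, hfc⟩
          rw [← Finset.erase_eq_of_notMem hxf]
          exact Finset.mem_image_of_mem _ (Finset.mem_filter.mpr ⟨hfE, hfne⟩)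
        · have hvx : v ≠ x := Finset.ne_of_mem_erase (hT.2.1 hvT)
          exact Or.inr ⟨v, hvT, le_trans (hg_deg_image_le E x v hvx) hvdeg⟩
  · -- edge deletion
    refine ⟨fun e he => hcard e (Finset.mem_of_mem_erase he),
      fun v hv => le_trans (Finset.card_le_card (Finset.filter_subset_filter _
        (Finset.erase_subset e₀ E))) (hdeg v hv), ?_⟩
    intro T hT
    by_cases hx : ∃ v ∈ T, v ∈ e₀
    · obtain ⟨v, hvT, hve⟩ := hx
      refine Or.inr ⟨v, hvT, ?_⟩
      have hsub : (E.erase e₀).filter (fun e => v ∈ e) ⊆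
          (E.filter (fun e => v ∈ e)).erase e₀ := by
        intro f hf
        simp only [Finset.mem_filter, Finset.mem_erase] at hf ⊢
        exact ⟨hf.1.1, hf.1.2, hf.2⟩
      have hmem : e₀ ∈ E.filter (fun e => v ∈ e) := Finset.mem_filter.mpr ⟨he₀, hve⟩
      have h1 : ((E.filter (fun e => v ∈ e)).erase e₀).card =
          (E.filter (fun e => v ∈ e)).card - 1 := Finset.card_erase_of_mem hmem
      have h2 : (E.filter (fun e => v ∈ e)).card ≤ 3 := hdeg v (hT.2.1 hvT)
      have := Finset.card_le_card hsub
      omega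
    · push_neg at hx
      have hclosed : ∀ e ∈ E, ∀ a ∈ e, a ∈ T → e ⊆ T := by
        intro e he a ha haT
        have hne : e ≠ e₀ := fun heq => hx a haT (heq ▸ ha)
        exact hg_absorb hT (Finset.mem_erase.mpr ⟨hne, he⟩) (hE e he).2 ha haT
      have hconn : ∀ a b : V, HGConn (E.erase e₀) a b → HGConn E a b := by
        apply hgconn_mono
        intro a b ⟨e, he, ha, hb⟩
        exact ⟨e, Finset.mem_of_mem_erase he, ha, hb⟩
      have hcompT : HGIsComponent W' E T := hg_comp_lift hT hT.2.1 hconn hclosed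
      rcases hcomp T hcompT with ⟨f, hfE, hfT, hfc⟩ | ⟨v, hvT, hvdeg⟩
      · have hne : f ≠ e₀ := by
          intro heq
          obtain ⟨a, ha⟩ := (hE f hfE).1
          exact hx a (hfT ha) (heq ▸ ha)
        exact Or.inl ⟨f, Finset.mem_erase.mpr ⟨hne, hfE⟩, hfT, hfc⟩
      · exact Or.inr ⟨v, hvT, le_trans (Finset.card_le_card
          (Finset.filter_subset_filter _ (Finset.erase_subset e₀ E))) hvdeg⟩
end
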